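/- arXiv:1412.5232 — 4 statements merged into one kernel-verified Lean document; each statement's English description precedes it below -/
import Mathlib

section
/- Let p and q be even natural numbers with p,q ≥ 2. The number of pair partitions of {1,...,p+q} with at least three crosses (blocks meeting both {1,...,p} and {p+1,...,p+q}) equals (p+q-1)!! - (1 + pq/2)·(p-1)!!·(q-1)!!. -/
open Finset

/-- A block of a partition of `Fin (p+q)` is a cross if it meets both
`{0,...,p-1}` and `{p,...,p+q-1}`. -/
def IsCross (p q : ℕ) (b : Finset (Fin (p + q))) : Prop :=
  (∃ i ∈ b, (i : ℕ) < p) ∧ ∃ i ∈ b, p ≤ (i : ℕ)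

instance (p q : ℕ) (b : Finset (Fin (p + q))) : Decidable (IsCross p q b) := by
  unfold IsCross; infer_instance

/-- The number of crosses of a partition of `Fin (p+q)`. -/
def crossCount (p q : ℕ) (P : Finpartition (Finset.univ : Finset (Fin (p + q)))) : ℕ :=
  (P.parts.filter (IsCross p q)).card

variable {α : Type*} [DecidableEq α]

/-- All pair partitions (perfect matchings) of a finset `s`. -/
def pairings (s : Finset α) : Finset (Finset (Finset α)) :=
  s.powerset.powerset.filter fun P =>
    (∀ b ∈ P, b.card = 2) ∧ (∀ b ∈ P, ∀ c ∈ P, b ≠ c → Disjoint b c) ∧ P.biUnion id = s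

lemma mem_pairings {s : Finset α} {P : Finset (Finset α)} :
    P ∈ pairings s ↔ (∀ b ∈ P, b.card = 2) ∧
      (∀ b ∈ P, ∀ c ∈ P, b ≠ c → Disjoint b c) ∧ P.biUnion id = s := by
  simp only [pairings, mem_filter, mem_powerset, and_iff_right_iff_imp]
  rintro ⟨-, -, rfl⟩ b hb
  simp only [mem_powerset]
  exact fun x hx => mem_biUnion.2 ⟨b, hb, hx⟩

lemma pairings_empty : pairings (∅ : Finset α) = {∅} := by
  ext P
  simp only [mem_pairings, mem_singleton]
  constructor
  · rintro ⟨hc, -, hU⟩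
    by_contra hne
    obtain ⟨b, hb⟩ := Finset.nonempty_iff_ne_empty.2 hne
    obtain ⟨x, hx⟩ := Finset.card_pos.1 (by rw [hc b hb]; norm_num : 0 < b.card)
    have : x ∈ P.biUnion id := mem_biUnion.2 ⟨b, hb, hx⟩
    rw [hU] at this; exact absurd this (notMem_empty x)
  · rintro rfl; refine ⟨by simp, by simp, by simp⟩

lemma block_subset {s : Finset α} {P : Finset (Finset α)} (hP : P ∈ pairings s)
    {b : Finset α} (hb : b ∈ P) : b ⊆ s := by
  obtain ⟨-, -, hU⟩ := mem_pairings.1 hP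
  exact hU ▸ fun x hx => mem_biUnion.2 ⟨b, hb, hx⟩

lemma exists_block {s : Finset α} {P : Finset (Finset α)} (hP : P ∈ pairings s)
    {x : α} (hx : x ∈ s) : ∃ b ∈ P, x ∈ b := by
  obtain ⟨-, -, hU⟩ := mem_pairings.1 hP
  simpa using mem_biUnion.1 (hU ▸ hx)

lemma pairings_eq_biUnion {s : Finset α} {x : α} (hx : x ∈ s) :
    pairings s = (s.erase x).biUnion
      (fun y => ((pairings ((s.erase x).erase y)).image (insert {x, y}))) := by
  ext P
  simp only [mem_biUnion, mem_image]
  constructor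
  · intro hP
    obtain ⟨hc, hd, hU⟩ := mem_pairings.1 hP
    obtain ⟨b, hb, hxb⟩ := exists_block hP hx
    obtain ⟨u, v, huv, rfl⟩ := Finset.card_eq_two.1 (hc b hb)
    -- b = {u,v}, x ∈ b
    have hxb' : x = u ∨ x = v := by simpa using hxb
    obtain ⟨y, hy, hbxy⟩ : ∃ y, y ≠ x ∧ ({u, v} : Finset α) = {x, y} := by
      rcases hxb' with rfl | rfl
      · exact ⟨v, fun h => huv h.symm, rfl⟩
      · exact ⟨u, fun h => huv h, by rw [Finset.pair_comm]⟩
    have hys : y ∈ s := block_subset hP hb (by rw [hbxy]; simp)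
    have hbP : ({x, y} : Finset α) ∈ P := by rw [← hbxy]; exact hb
    refine ⟨y, Finset.mem_erase.2 ⟨hy, hys⟩, P.erase {x, y}, ?_, ?_⟩
    · rw [mem_pairings]
      refine ⟨fun c hc' => hc c (Finset.mem_of_mem_erase hc'),
        fun c hc' d hd' hne => hd c (Finset.mem_of_mem_erase hc') d (Finset.mem_of_mem_erase hd') hne, ?_⟩
      ext z
      constructor
      · intro hmem
        obtain ⟨c, hc', hz⟩ := mem_biUnion.1 hmem
        rw [id_eq] at hz
        have hcP := Finset.mem_of_mem_erase hc'
        have hne : c ≠ ({x, y} : Finset α) := (Finset.mem_erase.1 hc').1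
        have hdisj := hd c hcP ({x, y} : Finset α) hbP hne
        have hz' : z ∈ s := block_subset hP hcP hz
        have hzx : z ∉ ({x, y} : Finset α) := fun h => (Finset.disjoint_left.1 hdisj hz) h
        simp only [Finset.mem_insert, Finset.mem_singleton] at hzx
        push_neg at hzx
        exact Finset.mem_erase.2 ⟨hzx.2, Finset.mem_erase.2 ⟨hzx.1, hz'⟩⟩
      · intro hmem
        obtain ⟨hzy, hzx, hzs⟩ : z ≠ y ∧ z ≠ x ∧ z ∈ s := by
          have h1 := Finset.mem_erase.1 hmem
          have h2 := Finset.mem_erase.1 h1.2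
          exact ⟨h1.1, h2.1, h2.2⟩
        obtain ⟨c, hc', hz⟩ := exists_block hP hzs
        refine mem_biUnion.2 ⟨c, Finset.mem_erase.2 ⟨?_, hc'⟩, hz⟩
        rintro rfl
        simp only [Finset.mem_insert, Finset.mem_singleton] at hz
        tauto
    · rw [Finset.insert_erase hbP]
  · rintro ⟨y, hy, Q, hQ, rfl⟩
    obtain ⟨hyx, hys⟩ := Finset.mem_erase.1 hy
    obtain ⟨hc, hd, hU⟩ := mem_pairings.1 hQ
    have hblk : ∀ c ∈ Q, x ∉ c ∧ y ∉ c := fun c hcQ => by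
      have hsub := block_subset hQ hcQ
      constructor <;> intro h <;> simpa using hsub h
    rw [mem_pairings]
    refine ⟨?_, ?_, ?_⟩
    · intro b hb
      rcases Finset.mem_insert.1 hb with rfl | hb
      · rw [Finset.card_pair (fun h => hyx h.symm)]
      · exact hc b hb
    · intro b hb c hc' hne
      rcases Finset.mem_insert.1 hb with rfl | hb <;> rcases Finset.mem_insert.1 hc' with rfl | hc'
      · exact absurd rfl hne
      · have := hblk c hc'
        rw [Finset.disjoint_left]
        intro z hz
        simp only [Finset.mem_insert, Finset.mem_singleton] at hz
        rcases hz with rfl | rfl <;> tauto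
      · have := hblk b hb
        rw [Finset.disjoint_right]
        intro z hz
        simp only [Finset.mem_insert, Finset.mem_singleton] at hz
        rcases hz with rfl | rfl <;> tauto
      · exact hd b hb c hc' hne
    · rw [Finset.biUnion_insert, hU]
      ext z
      simp only [Finset.mem_union, Finset.mem_insert, Finset.mem_singleton, Finset.mem_erase, id]
      constructor
      · rintro ((rfl | rfl) | ⟨-, -, h⟩)
        exacts [hx, hys, h]
      · intro hz
        by_cases h1 : z = x
        · exact Or.inl (Or.inl h1)
        by_cases h2 : z = y
        · exact Or.inl (Or.inr h2)
        · exact Or.inr ⟨h2, h1, hz⟩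

lemma subset_of_mem_image_pairings {s : Finset α} {x y : α} (hy : y ∈ s.erase x)
    {P : Finset (Finset α)} (hP : P ∈ (pairings ((s.erase x).erase y)).image (insert {x, y})) :
    ({x, y} : Finset α) ∈ P := by
  obtain ⟨Q, hQ, rfl⟩ := Finset.mem_image.1 hP
  exact Finset.mem_insert_self _ _

lemma card_pairings : ∀ (n : ℕ) (s : Finset α), s.card = 2 * n →
    (pairings s).card = Nat.doubleFactorial (2 * n - 1) := by
  intro n
  induction n with
  | zero =>
    intro s hs
    rw [Finset.card_eq_zero.1 hs, pairings_empty]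
    rfl
  | succ n ih =>
    intro s hs
    have hpos : 0 < s.card := by omega
    obtain ⟨x, hx⟩ := Finset.card_pos.1 hpos
    rw [pairings_eq_biUnion hx]
    rw [Finset.card_biUnion]
    · have hterm : ∀ y ∈ s.erase x,
          ((pairings ((s.erase x).erase y)).image (insert {x, y})).card
            = Nat.doubleFactorial (2 * n - 1) := by
        intro y hy
        have hyx := (Finset.mem_erase.1 hy).1
        have hys := (Finset.mem_erase.1 hy).2
        rw [Finset.card_image_of_injOn, ih ((s.erase x).erase y)]
        · rw [Finset.card_erase_of_mem (Finset.mem_erase.2 ⟨hyx, hys⟩),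
            Finset.card_erase_of_mem hx, hs]
          omega
        · intro Q1 h1 Q2 h2 heq
          have hnot : ∀ Q ∈ pairings ((s.erase x).erase y), ({x, y} : Finset α) ∉ Q := by
            intro Q hQ hmem
            have := block_subset hQ hmem (Finset.mem_insert_self x {y})
            simp at this
          have e1 := Finset.erase_insert (hnot Q1 h1)
          have e2 := Finset.erase_insert (hnot Q2 h2)
          rw [← e1, ← e2, heq]
      rw [Finset.sum_congr rfl hterm, Finset.sum_const,
        Finset.card_erase_of_mem hx, hs, smul_eq_mul]
      have h1 : 2 * (n + 1) - 1 = 2 * n + 1 := by omega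
      rw [h1, Nat.doubleFactorial_add_one]
    · intro y hy y' hy' hne
      rw [Function.onFun_apply, Finset.disjoint_left]
      intro P hP hP'
      have h1 : ({x, y} : Finset α) ∈ P := subset_of_mem_image_pairings hy hP
      have h2 : ({x, y'} : Finset α) ∈ P := subset_of_mem_image_pairings hy' hP'
      have hPs : P ∈ pairings s := by rw [pairings_eq_biUnion hx]; exact mem_biUnion.2 ⟨y, hy, hP⟩
      obtain ⟨-, hd, -⟩ := mem_pairings.1 hPs
      have : ({x, y} : Finset α) = {x, y'} := by
        by_contra hne2
        exact Finset.disjoint_left.1 (hd _ h1 _ h2 hne2) (Finset.mem_insert_self x {y})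
          (Finset.mem_insert_self x {y'})
      apply hne
      have hyx := (Finset.mem_erase.1 hy).1
      have : y ∈ ({x, y'} : Finset α) := this ▸ (by simp : y ∈ ({x, y} : Finset α))
      simp only [Finset.mem_insert, Finset.mem_singleton] at this
      tauto

def ncp (u v : Finset α) : Finset (Finset (Finset α)) :=
  (pairings (u ∪ v)).filter (fun P => ∀ b ∈ P, b ⊆ u ∨ b ⊆ v)

lemma mem_ncp {u v : Finset α} {P : Finset (Finset α)} :
    P ∈ ncp u v ↔ P ∈ pairings (u ∪ v) ∧ ∀ b ∈ P, b ⊆ u ∨ b ⊆ v :=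
  Finset.mem_filter

lemma card_pairings_nocross (u v : Finset α) (huv : Disjoint u v) :
    (ncp u v).card = (pairings u).card * (pairings v).card := by
  unfold ncp
  rw [← Finset.card_product]
  apply Finset.card_nbij' (i := fun P => (P.filter (· ⊆ u), P.filter (· ⊆ v)))
    (j := fun AB => AB.1 ∪ AB.2)
  · intro P hP
    obtain ⟨hPp, hsplit⟩ := Finset.mem_filter.1 hP
    obtain ⟨hc, hd, hU⟩ := mem_pairings.1 hPp
    have key : ∀ (w w' : Finset α), Disjoint w w' → u ∪ v = w ∪ w' →
        (∀ b ∈ P, b ⊆ w ∨ b ⊆ w') → P.filter (· ⊆ w) ∈ pairings w := by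
      intro w w' hww' huvw hsp
      rw [mem_pairings]
      refine ⟨fun b hb => hc b (Finset.mem_of_mem_filter b hb),
        fun b hb c hc' hne => hd b (Finset.mem_of_mem_filter b hb) c
          (Finset.mem_of_mem_filter c hc') hne, ?_⟩
      ext z
      simp only [mem_biUnion, Finset.mem_filter, id_eq]
      constructor
      · rintro ⟨b, ⟨hbP, hbw⟩, hz⟩
        exact hbw hz
      · intro hz
        have hz2 : z ∈ u ∪ v := by rw [huvw]; exact Finset.mem_union_left _ hz
        obtain ⟨b, hbP, hzb⟩ := exists_block hPp hz2
        refine ⟨b, ⟨hbP, ?_⟩, hzb⟩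
        rcases hsp b hbP with h | h
        · exact h
        · exact absurd hz (Finset.disjoint_right.1 hww' (h hzb))
    refine Finset.mem_product.2 ⟨key u v huv rfl hsplit, key v u huv.symm (Finset.union_comm u v) ?_⟩
    exact fun b hb => (hsplit b hb).symm
  · rintro ⟨A, B⟩ hAB
    obtain ⟨hA, hB⟩ := Finset.mem_product.1 hAB
    obtain ⟨hcA, hdA, hUA⟩ := mem_pairings.1 hA
    obtain ⟨hcB, hdB, hUB⟩ := mem_pairings.1 hB
    have hsubA : ∀ b ∈ A, b ⊆ u := fun b hb => block_subset hA hb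
    have hsubB : ∀ b ∈ B, b ⊆ v := fun b hb => block_subset hB hb
    rw [Finset.mem_coe, Finset.mem_filter, mem_pairings]
    refine ⟨⟨?_, ?_, ?_⟩, ?_⟩
    · intro b hb
      rcases Finset.mem_union.1 hb with h | h
      · exact hcA b h
      · exact hcB b h
    · intro b hb c hc hne
      rcases Finset.mem_union.1 hb with h1 | h1 <;> rcases Finset.mem_union.1 hc with h2 | h2
      · exact hdA b h1 c h2 hne
      · exact Finset.disjoint_of_subset_left (hsubA b h1)
          (Finset.disjoint_of_subset_right (hsubB c h2) huv)
      · exact Finset.disjoint_of_subset_left (hsubB b h1)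
          (Finset.disjoint_of_subset_right (hsubA c h2) huv.symm)
      · exact hdB b h1 c h2 hne
    · ext z
      simp only [mem_biUnion, Finset.mem_union, id_eq, ← hUA, ← hUB, mem_biUnion]
      constructor
      · rintro ⟨b, hb | hb, hz⟩
        · exact Or.inl ⟨b, hb, hz⟩
        · exact Or.inr ⟨b, hb, hz⟩
      · rintro (⟨b, hb, hz⟩ | ⟨b, hb, hz⟩)
        · exact ⟨b, Or.inl hb, hz⟩
        · exact ⟨b, Or.inr hb, hz⟩
    · intro b hb
      rcases Finset.mem_union.1 hb with h | h
      · exact Or.inl (hsubA b h)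
      · exact Or.inr (hsubB b h)
  · intro P hP
    obtain ⟨hPp, hsplit⟩ := Finset.mem_filter.1 hP
    obtain ⟨hc, -, -⟩ := mem_pairings.1 hPp
    ext b
    simp only [Finset.mem_union, Finset.mem_filter]
    constructor
    · rintro (⟨h, -⟩ | ⟨h, -⟩) <;> exact h
    · intro hb
      rcases hsplit b hb with h | h
      · exact Or.inl ⟨hb, h⟩
      · exact Or.inr ⟨hb, h⟩
  · rintro ⟨A, B⟩ hAB
    obtain ⟨hA, hB⟩ := Finset.mem_product.1 hAB
    have hsubA : ∀ b ∈ A, b ⊆ u := fun b hb => block_subset hA hb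
    have hsubB : ∀ b ∈ B, b ⊆ v := fun b hb => block_subset hB hb
    have hne : ∀ {s' : Finset (Finset α)}, (s' ∈ pairings u ∨ s' ∈ pairings v) →
        ∀ b ∈ s', b.Nonempty := by
      rintro s' (hs' | hs') b hb <;>
        exact Finset.card_pos.1 (by rw [(mem_pairings.1 hs').1 b hb]; norm_num)
    have h1 : (A ∪ B).filter (· ⊆ u) = A := by
      ext b
      simp only [Finset.mem_filter, Finset.mem_union]
      constructor
      · rintro ⟨hb | hb, hbu⟩
        · exact hb
        · obtain ⟨z, hz⟩ := hne (Or.inr hB) b hb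
          exact absurd (hbu hz) (Finset.disjoint_right.1 huv (hsubB b hb hz))
      · exact fun hb => ⟨Or.inl hb, hsubA b hb⟩
    have h2 : (A ∪ B).filter (· ⊆ v) = B := by
      ext b
      simp only [Finset.mem_filter, Finset.mem_union]
      constructor
      · rintro ⟨hb | hb, hbv⟩
        · obtain ⟨z, hz⟩ := hne (Or.inl hA) b hb
          exact absurd (hbv hz) (Finset.disjoint_left.1 huv (hsubA b hb hz))
        · exact hb
      · exact fun hb => ⟨Or.inr hb, hsubB b hb⟩
    simp only [h1, h2]

lemma pairings_union_mem {s t : Finset α} (hst : Disjoint s t)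
    {P Q : Finset (Finset α)} (hP : P ∈ pairings s) (hQ : Q ∈ pairings t) :
    P ∪ Q ∈ pairings (s ∪ t) := by
  obtain ⟨hc1, hd1, hU1⟩ := mem_pairings.1 hP
  obtain ⟨hc2, hd2, hU2⟩ := mem_pairings.1 hQ
  rw [mem_pairings]
  refine ⟨?_, ?_, ?_⟩
  · intro b hb
    rcases Finset.mem_union.1 hb with h | h
    · exact hc1 b h
    · exact hc2 b h
  · intro b hb c hc hne
    rcases Finset.mem_union.1 hb with h1 | h1 <;> rcases Finset.mem_union.1 hc with h2 | h2
    · exact hd1 b h1 c h2 hne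
    · exact Finset.disjoint_of_subset_left (block_subset hP h1)
        (Finset.disjoint_of_subset_right (block_subset hQ h2) hst)
    · exact Finset.disjoint_of_subset_left (block_subset hQ h1)
        (Finset.disjoint_of_subset_right (block_subset hP h2) hst.symm)
    · exact hd2 b h1 c h2 hne
  · ext z
    simp only [mem_biUnion, Finset.mem_union, id_eq, ← hU1, ← hU2, mem_biUnion]
    constructor
    · rintro ⟨b, hb | hb, hz⟩
      · exact Or.inl ⟨b, hb, hz⟩
      · exact Or.inr ⟨b, hb, hz⟩
    · rintro (⟨b, hb, hz⟩ | ⟨b, hb, hz⟩)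
      · exact ⟨b, Or.inl hb, hz⟩
      · exact ⟨b, Or.inr hb, hz⟩

lemma pairings_sdiff_mem {s : Finset α} {P C : Finset (Finset α)}
    (hP : P ∈ pairings s) (hC : C ⊆ P) : P \ C ∈ pairings (s \ C.biUnion id) := by
  obtain ⟨hc, hd, hU⟩ := mem_pairings.1 hP
  rw [mem_pairings]
  refine ⟨fun b hb => hc b (Finset.mem_sdiff.1 hb).1,
    fun b hb c hc' hne => hd b (Finset.mem_sdiff.1 hb).1 c (Finset.mem_sdiff.1 hc').1 hne, ?_⟩
  ext z
  simp only [mem_biUnion, Finset.mem_sdiff, id_eq]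
  constructor
  · rintro ⟨b, ⟨hbP, hbC⟩, hz⟩
    refine ⟨block_subset hP hbP hz, ?_⟩
    rintro ⟨c, hcC, hzc⟩
    have hcP := hC hcC
    have : b ≠ c := by rintro rfl; exact hbC hcC
    exact Finset.disjoint_left.1 (hd b hbP c hcP this) hz hzc
  · rintro ⟨hzs, hznC⟩
    obtain ⟨b, hbP, hzb⟩ := exists_block hP hzs
    refine ⟨b, ⟨hbP, fun hbC => hznC ⟨b, hbC, hzb⟩⟩, hzb⟩

lemma sum_card_inter {s u : Finset α} {P : Finset (Finset α)}
    (hP : P ∈ pairings s) (hu : u ⊆ s) :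
    ∑ b ∈ P, (b ∩ u).card = u.card := by
  obtain ⟨hc, hd, hU⟩ := mem_pairings.1 hP
  have hbi : P.biUnion (fun b => b ∩ u) = u := by
    ext z
    simp only [mem_biUnion, Finset.mem_inter]
    constructor
    · rintro ⟨b, hb, -, hz⟩; exact hz
    · intro hz
      obtain ⟨b, hb, hzb⟩ := exists_block hP (hu hz)
      exact ⟨b, hb, hzb, hz⟩
  conv_rhs => rw [← hbi]
  rw [Finset.card_biUnion]
  intro b hb c hc' hne
  exact Finset.disjoint_of_subset_left Finset.inter_subset_left
    (Finset.disjoint_of_subset_right Finset.inter_subset_left (hd b hb c hc' hne))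

lemma card_filter_lt_product {β : Type*} [DecidableEq β] [LinearOrder β] (s : Finset β) :
    ((s ×ˢ s).filter (fun a => a.1 < a.2)).card = s.card.choose 2 := by
  rw [← Finset.card_powersetCard]
  apply Finset.card_nbij (i := fun a => {a.1, a.2})
  · rintro ⟨x, y⟩ h
    simp only [Finset.mem_coe, Finset.mem_filter, Finset.mem_product] at h
    obtain ⟨⟨hx, hy⟩, hlt⟩ := h
    rw [Finset.mem_coe, Finset.mem_powersetCard]
    refine ⟨?_, Finset.card_pair hlt.ne⟩
    intro z hz
    simp only [Finset.mem_insert, Finset.mem_singleton] at hz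
    rcases hz with rfl | rfl <;> assumption
  · rintro ⟨x, y⟩ hxy ⟨x', y'⟩ hxy' heq
    simp only [Finset.coe_filter, Set.mem_setOf_eq, Finset.mem_product] at hxy hxy'
    obtain ⟨-, hlt⟩ := hxy
    obtain ⟨-, hlt'⟩ := hxy'
    have heq' : ({x, y} : Finset β) = {x', y'} := heq
    have hx : x ∈ ({x', y'} : Finset β) := heq' ▸ Finset.mem_insert_self x {y}
    have hy : y ∈ ({x', y'} : Finset β) := heq' ▸ Finset.mem_insert_of_mem (Finset.mem_singleton_self y)
    have hx' : x' ∈ ({x, y} : Finset β) := heq'.symm ▸ Finset.mem_insert_self x' {y'}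
    have hy' : y' ∈ ({x, y} : Finset β) := heq'.symm ▸ Finset.mem_insert_of_mem (Finset.mem_singleton_self y')
    simp only [Finset.mem_insert, Finset.mem_singleton] at hx hy hx' hy'
    have hxx' : x = x' := by
      rcases hx with rfl | rfl
      · rfl
      · rcases hy with rfl | rfl
        · exact absurd hlt (lt_asymm hlt')
        · exact absurd hlt (lt_irrefl _)
    subst hxx'
    have : y = y' := by
      rcases hy with h | h
      · subst h; exact absurd hlt (lt_irrefl _)
      · exact h
    simp [this]
  · intro t ht
    rw [Finset.mem_coe, Finset.mem_powersetCard] at ht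
    obtain ⟨hts, hcard⟩ := ht
    obtain ⟨x, y, hne, rfl⟩ := Finset.card_eq_two.1 hcard
    rcases hne.lt_or_gt with h | h
    · refine ⟨(x, y), ?_, rfl⟩
      simp only [Finset.coe_filter, Set.mem_setOf_eq, Finset.mem_product]
      exact ⟨⟨hts (by simp), hts (by simp)⟩, h⟩
    · refine ⟨(y, x), ?_, ?_⟩
      · simp only [Finset.coe_filter, Set.mem_setOf_eq, Finset.mem_product]
        exact ⟨⟨hts (by simp), hts (by simp)⟩, h⟩
      · simp [Finset.pair_comm]

section Bipartite

variable (p q : ℕ)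

def Lft : Finset (Fin (p + q)) := univ.filter (fun i => (i : ℕ) < p)

def Rgt : Finset (Fin (p + q)) := univ.filter (fun i => p ≤ (i : ℕ))

lemma mem_Lft {i : Fin (p + q)} : i ∈ Lft p q ↔ (i : ℕ) < p := by simp [Lft]

lemma mem_Rgt {i : Fin (p + q)} : i ∈ Rgt p q ↔ p ≤ (i : ℕ) := by simp [Rgt]

lemma Lft_union_Rgt : Lft p q ∪ Rgt p q = univ := by
  ext i; simp [mem_Lft, mem_Rgt, Finset.mem_union]; omega

lemma disjoint_Lft_Rgt : Disjoint (Lft p q) (Rgt p q) := by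
  rw [Finset.disjoint_left]
  intro i hi hi'
  rw [mem_Lft] at hi; rw [mem_Rgt] at hi'
  omega

lemma card_Lft : (Lft p q).card = p := by
  have h : (univ : Finset (Fin p)).card = (Lft p q).card := ?_
  · simpa using h.symm
  apply Finset.card_nbij (i := Fin.castAdd q)
  · intro i _
    simp [mem_Lft]
  · intro i _ j _ hij
    exact Fin.castAdd_injective p q hij
  · intro x hx
    rw [Finset.mem_coe, mem_Lft] at hx
    exact ⟨⟨(x : ℕ), hx⟩, by simp, by ext; simp⟩

lemma card_Rgt : (Rgt p q).card = q := by
  have h : (univ : Finset (Fin q)).card = (Rgt p q).card := ?_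
  · simpa using h.symm
  apply Finset.card_nbij (i := Fin.natAdd p)
  · intro i _
    simp [mem_Rgt]
  · intro i _ j _ hij
    have h := congrArg Fin.val hij
    simp only [Fin.natAdd] at h
    exact Fin.ext (by omega)
  · intro x hx
    rw [Finset.mem_coe, mem_Rgt] at hx
    refine ⟨⟨(x : ℕ) - p, by omega⟩, by simp, ?_⟩
    ext
    simp only [Fin.natAdd_mk]
    omega

lemma not_isCross_iff (b : Finset (Fin (p + q))) :
    ¬ IsCross p q b ↔ b ⊆ Lft p q ∨ b ⊆ Rgt p q := by
  unfold IsCross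
  constructor
  · intro h
    by_cases hL : ∃ i ∈ b, (i : ℕ) < p
    · left
      intro i hi
      rw [mem_Lft]
      by_contra hip
      exact h ⟨hL, ⟨i, hi, le_of_not_gt hip⟩⟩
    · push_neg at hL
      right
      intro i hi
      rw [mem_Rgt]
      exact hL i hi
  · rintro (h | h) ⟨⟨i, hi, hip⟩, ⟨j, hj, hjp⟩⟩
    · have := (mem_Lft p q).1 (h hj); omega
    · have := (mem_Rgt p q).1 (h hi); omega

lemma cross_block_struct (b : Finset (Fin (p + q))) (hb2 : b.card = 2)
    (hbc : IsCross p q b) : ∃ x y, x ∈ Lft p q ∧ y ∈ Rgt p q ∧ b = {x, y} := by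
  obtain ⟨⟨x, hx, hxp⟩, ⟨y, hy, hyp⟩⟩ := hbc
  have hne : x ≠ y := by intro h; subst h; omega
  refine ⟨x, y, (mem_Lft p q).2 hxp, (mem_Rgt p q).2 hyp, ?_⟩
  have hsub : ({x, y} : Finset (Fin (p + q))) ⊆ b := by
    intro z hz
    simp only [Finset.mem_insert, Finset.mem_singleton] at hz
    rcases hz with rfl | rfl <;> assumption
  exact (Finset.eq_of_subset_of_card_le hsub (by rw [hb2, Finset.card_pair hne])).symm

end Bipartite

section Exactly2

variable (p q : ℕ)

abbrev Quad (p q : ℕ) := ((Fin (p + q)) × (Fin (p + q))) × ((Fin (p + q)) × (Fin (p + q)))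

def Kset : Finset (Quad p q) :=
  ((Lft p q ×ˢ Lft p q).filter fun a => a.1 < a.2) ×ˢ
    ((Rgt p q ×ˢ Rgt p q).filter fun a => a.1 ≠ a.2)

def uSet (k : Quad p q) : Finset (Fin (p + q)) := ((Lft p q).erase k.1.1).erase k.1.2

def vSet (k : Quad p q) : Finset (Fin (p + q)) := ((Rgt p q).erase k.2.1).erase k.2.2

def Dk (k : Quad p q) : Finset (Finset (Fin (p + q))) := {{k.1.1, k.2.1}, {k.1.2, k.2.2}}

def Fk (k : Quad p q) : Finset (Finset (Finset (Fin (p + q)))) :=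
  (ncp (uSet p q k) (vSet p q k)).image (· ∪ Dk p q k)

lemma mem_Kset {k : Quad p q} : k ∈ Kset p q ↔
    k.1.1 ∈ Lft p q ∧ k.1.2 ∈ Lft p q ∧ k.1.1 < k.1.2 ∧
      k.2.1 ∈ Rgt p q ∧ k.2.2 ∈ Rgt p q ∧ k.2.1 ≠ k.2.2 := by
  obtain ⟨⟨x1, x2⟩, ⟨y1, y2⟩⟩ := k
  simp only [Kset, Finset.mem_product, Finset.mem_filter]
  tauto

/-- If `{x,y} = {x',y'}` with `x,x'` on the left and `y,y'` on the right, the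
components agree. -/
lemma pair_eq_pair {x x' y y' : Fin (p + q)} (hx : x ∈ Lft p q) (hx' : x' ∈ Lft p q)
    (hy : y ∈ Rgt p q) (hy' : y' ∈ Rgt p q)
    (h : ({x, y} : Finset (Fin (p + q))) = {x', y'}) : x = x' ∧ y = y' := by
  rw [mem_Lft] at hx hx'
  rw [mem_Rgt] at hy hy'
  have h1 : x ∈ ({x', y'} : Finset (Fin (p + q))) := h ▸ Finset.mem_insert_self x {y}
  have h2 : y ∈ ({x', y'} : Finset (Fin (p + q))) :=
    h ▸ Finset.mem_insert_of_mem (Finset.mem_singleton_self y)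
  simp only [Finset.mem_insert, Finset.mem_singleton] at h1 h2
  constructor
  · rcases h1 with h1 | h1
    · exact h1
    · subst h1; omega
  · rcases h2 with h2 | h2
    · subst h2; omega
    · exact h2

lemma Dk_facts {k : Quad p q} (hk : k ∈ Kset p q) :
    ({k.1.1, k.2.1} : Finset (Fin (p + q))) ≠ {k.1.2, k.2.2} ∧
    (Dk p q k).card = 2 ∧ (∀ b ∈ Dk p q k, b.card = 2) ∧
    (∀ b ∈ Dk p q k, IsCross p q b) ∧
    (∀ b ∈ Dk p q k, ∀ c ∈ Dk p q k, b ≠ c → Disjoint b c) := by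
  obtain ⟨hx1, hx2, hxlt, hy1, hy2, hyne⟩ := (mem_Kset p q).1 hk
  obtain ⟨⟨x1, x2⟩, ⟨y1, y2⟩⟩ := k
  simp only at hx1 hx2 hxlt hy1 hy2 hyne ⊢
  rw [mem_Lft] at hx1 hx2
  rw [mem_Rgt] at hy1 hy2
  have hne12 : ({x1, y1} : Finset (Fin (p + q))) ≠ {x2, y2} := by
    intro h
    have hx : x1 ∈ ({x2, y2} : Finset (Fin (p + q))) := h ▸ Finset.mem_insert_self x1 {y1}
    simp only [Finset.mem_insert, Finset.mem_singleton] at hx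
    rcases hx with rfl | rfl
    · exact absurd hxlt (lt_irrefl _)
    · omega
  have hcard : ∀ b ∈ Dk p q ((x1, x2), (y1, y2)), b.card = 2 := by
    intro b hb
    simp only [Dk, Finset.mem_insert, Finset.mem_singleton] at hb
    rcases hb with rfl | rfl
    · exact Finset.card_pair (fun h => by rw [h] at hx1; omega)
    · exact Finset.card_pair (fun h => by rw [h] at hx2; omega)
  refine ⟨hne12, ?_, hcard, ?_, ?_⟩
  · exact Finset.card_pair hne12
  · intro b hb
    simp only [Dk, Finset.mem_insert, Finset.mem_singleton] at hb
    rcases hb with rfl | rfl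
    · exact ⟨⟨x1, by simp, hx1⟩, ⟨y1, by simp, hy1⟩⟩
    · exact ⟨⟨x2, by simp, hx2⟩, ⟨y2, by simp, hy2⟩⟩
  · intro b hb c hc hne
    simp only [Dk, Finset.mem_insert, Finset.mem_singleton] at hb hc
    have key : Disjoint ({x1, y1} : Finset (Fin (p + q))) {x2, y2} := by
      rw [Finset.disjoint_left]
      intro z hz hz'
      simp only [Finset.mem_insert, Finset.mem_singleton] at hz hz'
      have hxne : x1 ≠ x2 := hxlt.ne
      rcases hz with rfl | rfl <;> rcases hz' with h | h
      · exact hxne h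
      · subst h; omega
      · subst h; omega
      · exact hyne h
    rcases hb with rfl | rfl <;> rcases hc with rfl | rfl
    · exact absurd rfl hne
    · exact key
    · exact key.symm
    · exact absurd rfl hne

lemma uSet_vSet_union {k : Quad p q} (hk : k ∈ Kset p q) :
    uSet p q k ∪ vSet p q k = univ \ (Dk p q k).biUnion id := by
  obtain ⟨hx1, hx2, hxlt, hy1, hy2, hyne⟩ := (mem_Kset p q).1 hk
  obtain ⟨⟨x1, x2⟩, ⟨y1, y2⟩⟩ := k
  simp only at hx1 hx2 hxlt hy1 hy2 hyne ⊢
  rw [mem_Lft] at hx1 hx2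
  rw [mem_Rgt] at hy1 hy2
  ext z
  simp only [uSet, vSet, Dk, Finset.mem_union, Finset.mem_erase, Finset.mem_sdiff,
    Finset.mem_univ, true_and, mem_biUnion, Finset.mem_insert, Finset.mem_singleton,
    mem_Lft, mem_Rgt, id_eq]
  constructor
  · rintro (⟨h2, h1, hz⟩ | ⟨h2, h1, hz⟩) <;>
    · rintro ⟨b, hb, hzb⟩
      rcases hb with rfl | rfl <;> simp only [Finset.mem_insert, Finset.mem_singleton] at hzb <;>
        rcases hzb with rfl | rfl <;> first | exact h1 rfl | exact h2 rfl | omega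
  · intro h
    push_neg at h
    have h1 := h ({x1, y1}) (Or.inl rfl)
    have h2 := h ({x2, y2}) (Or.inr rfl)
    simp only [Finset.mem_insert, Finset.mem_singleton] at h1 h2
    push_neg at h1 h2
    by_cases hzp : (z : ℕ) < p
    · exact Or.inl ⟨h2.1, h1.1, hzp⟩
    · exact Or.inr ⟨h2.2, h1.2, by omega⟩

end Exactly2

section Exactly2b

variable (p q : ℕ)

lemma uSet_subset (k : Quad p q) : uSet p q k ⊆ Lft p q :=
  (Finset.erase_subset _ _).trans (Finset.erase_subset _ _)

lemma vSet_subset (k : Quad p q) : vSet p q k ⊆ Rgt p q :=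
  (Finset.erase_subset _ _).trans (Finset.erase_subset _ _)

lemma disjoint_uv (k : Quad p q) : Disjoint (uSet p q k) (vSet p q k) :=
  Finset.disjoint_of_subset_left (uSet_subset p q k)
    (Finset.disjoint_of_subset_right (vSet_subset p q k) (disjoint_Lft_Rgt p q))

lemma Dk_mem_pairings {k : Quad p q} (hk : k ∈ Kset p q) :
    Dk p q k ∈ pairings ((Dk p q k).biUnion id) := by
  obtain ⟨-, -, hcard, -, hdisj⟩ := Dk_facts p q hk
  exact mem_pairings.2 ⟨hcard, hdisj, rfl⟩

lemma filter_isCross_of_mem_Fk {k : Quad p q} (hk : k ∈ Kset p q)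
    {P : Finset (Finset (Fin (p + q)))} (hP : P ∈ Fk p q k) :
    P.filter (IsCross p q) = Dk p q k := by
  obtain ⟨Q, hQ, rfl⟩ := Finset.mem_image.1 hP
  obtain ⟨hQp, hQnc⟩ := mem_ncp.1 hQ
  obtain ⟨-, hcross, -⟩ := (Dk_facts p q hk).2.2
  rw [Finset.filter_union]
  have h1 : Q.filter (IsCross p q) = ∅ := by
    rw [Finset.filter_eq_empty_iff]
    intro b hb
    rw [not_isCross_iff]
    rcases hQnc b hb with h | h
    · exact Or.inl (h.trans (uSet_subset p q k))
    · exact Or.inr (h.trans (vSet_subset p q k))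
  have h2 : (Dk p q k).filter (IsCross p q) = Dk p q k :=
    Finset.filter_true_of_mem hcross
  rw [h1, h2, Finset.empty_union]

lemma mem_pairings_of_mem_Fk {k : Quad p q} (hk : k ∈ Kset p q)
    {P : Finset (Finset (Fin (p + q)))} (hP : P ∈ Fk p q k) :
    P ∈ pairings (univ : Finset (Fin (p + q))) := by
  obtain ⟨Q, hQ, rfl⟩ := Finset.mem_image.1 hP
  obtain ⟨hQp, hQnc⟩ := mem_ncp.1 hQ
  have hdisj : Disjoint (uSet p q k ∪ vSet p q k) ((Dk p q k).biUnion id) := by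
    rw [uSet_vSet_union p q hk]
    exact Finset.sdiff_disjoint
  have := pairings_union_mem hdisj hQp (Dk_mem_pairings p q hk)
  rwa [uSet_vSet_union p q hk, Finset.sdiff_union_of_subset (Finset.subset_univ _)] at this

lemma mem_biUnion_elem {k : Quad p q} {z : Fin (p + q)}
    (hz : z ∈ ({k.1.1, k.1.2, k.2.1, k.2.2} : Finset (Fin (p + q)))) :
    z ∈ (Dk p q k).biUnion id := by
  simp only [Finset.mem_insert, Finset.mem_singleton] at hz
  simp only [Dk, mem_biUnion, Finset.mem_insert, Finset.mem_singleton, id_eq]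
  rcases hz with rfl | rfl | rfl | rfl
  · exact ⟨{k.1.1, k.2.1}, Or.inl rfl, by simp⟩
  · exact ⟨{k.1.2, k.2.2}, Or.inr rfl, by simp⟩
  · exact ⟨{k.1.1, k.2.1}, Or.inl rfl, by simp⟩
  · exact ⟨{k.1.2, k.2.2}, Or.inr rfl, by simp⟩

lemma mem_Fk_of {k : Quad p q} (hk : k ∈ Kset p q)
    {P : Finset (Finset (Fin (p + q)))} (hPp : P ∈ pairings (univ : Finset (Fin (p + q))))
    (hfe : P.filter (IsCross p q) = Dk p q k) : P ∈ Fk p q k := by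
  have hsub : Dk p q k ⊆ P := hfe ▸ Finset.filter_subset _ _
  have hQ := pairings_sdiff_mem hPp hsub
  rw [← uSet_vSet_union p q hk] at hQ
  refine Finset.mem_image.2 ⟨P \ Dk p q k, mem_ncp.2 ⟨hQ, ?_⟩, ?_⟩
  · intro b hb
    have hbP : b ∈ P := (Finset.mem_sdiff.1 hb).1
    have hbnc : ¬ IsCross p q b := by
      intro hcr
      exact (Finset.mem_sdiff.1 hb).2 (hfe ▸ Finset.mem_filter.2 ⟨hbP, hcr⟩)
    have hbsub : b ⊆ uSet p q k ∪ vSet p q k := block_subset hQ hb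
    rcases (not_isCross_iff p q b).1 hbnc with h | h
    · left
      intro z hz
      have hz2 := hbsub hz
      rw [uSet_vSet_union p q hk, Finset.mem_sdiff] at hz2
      have hzL := h hz
      simp only [uSet, Finset.mem_erase]
      refine ⟨?_, ?_, hzL⟩
      · rintro rfl
        exact hz2.2 (mem_biUnion_elem p q (by simp))
      · rintro rfl
        exact hz2.2 (mem_biUnion_elem p q (by simp))
    · right
      intro z hz
      have hz2 := hbsub hz
      rw [uSet_vSet_union p q hk, Finset.mem_sdiff] at hz2
      have hzR := h hz
      simp only [vSet, Finset.mem_erase]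
      refine ⟨?_, ?_, hzR⟩
      · rintro rfl
        exact hz2.2 (mem_biUnion_elem p q (by simp))
      · rintro rfl
        exact hz2.2 (mem_biUnion_elem p q (by simp))
  · exact Finset.sdiff_union_of_subset hsub

lemma Dk_inj {k k' : Quad p q} (hk : k ∈ Kset p q) (hk' : k' ∈ Kset p q)
    (h : Dk p q k = Dk p q k') : k = k' := by
  obtain ⟨hx1, hx2, hxlt, hy1, hy2, hyne⟩ := (mem_Kset p q).1 hk
  obtain ⟨hx1', hx2', hxlt', hy1', hy2', hyne'⟩ := (mem_Kset p q).1 hk'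
  obtain ⟨⟨x1, x2⟩, ⟨y1, y2⟩⟩ := k
  obtain ⟨⟨x1', x2'⟩, ⟨y1', y2'⟩⟩ := k'
  simp only at hx1 hx2 hxlt hy1 hy2 hyne hx1' hx2' hxlt' hy1' hy2' hyne' ⊢
  have h1 : ({x1, y1} : Finset (Fin (p + q))) ∈ Dk p q ((x1', x2'), (y1', y2')) := by
    rw [← h]; simp [Dk]
  have h2 : ({x2, y2} : Finset (Fin (p + q))) ∈ Dk p q ((x1', x2'), (y1', y2')) := by
    rw [← h]; simp [Dk]
  simp only [Dk, Finset.mem_insert, Finset.mem_singleton] at h1 h2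
  rcases h1 with h1 | h1
  · obtain ⟨rfl, rfl⟩ := pair_eq_pair p q hx1 hx1' hy1 hy1' h1
    rcases h2 with h2 | h2
    · obtain ⟨h3, -⟩ := pair_eq_pair p q hx2 hx1 hy2 hy1 h2
      exact absurd h3 hxlt.ne'
    · obtain ⟨rfl, rfl⟩ := pair_eq_pair p q hx2 hx2' hy2 hy2' h2
      rfl
  · obtain ⟨e1, e2⟩ := pair_eq_pair p q hx1 hx2' hy1 hy2' h1
    rcases h2 with h2 | h2
    · obtain ⟨e3, e4⟩ := pair_eq_pair p q hx2 hx1' hy2 hy1' h2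
      rw [e1, e3] at hxlt
      exact absurd (hxlt'.trans hxlt) (lt_irrefl _)
    · obtain ⟨e3, -⟩ := pair_eq_pair p q hx2 hx2' hy2 hy2' h2
      rw [e1, e3] at hxlt
      exact absurd hxlt (lt_irrefl _)

end Exactly2b

section Counts

variable (p q : ℕ)

lemma card_E0 :
    ((pairings (univ : Finset (Fin (p + q)))).filter
        (fun P => (P.filter (IsCross p q)).card = 0)).card =
      (pairings (Lft p q)).card * (pairings (Rgt p q)).card := by
  rw [← card_pairings_nocross (Lft p q) (Rgt p q) (disjoint_Lft_Rgt p q)]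
  rw [← Lft_union_Rgt p q]
  congr 1
  ext P
  simp only [ncp, Finset.mem_filter, and_congr_right_iff, Finset.card_eq_zero,
    Finset.filter_eq_empty_iff]
  intro hP
  constructor
  · intro h b hb
    exact (not_isCross_iff p q b).1 (h hb)
  · intro h b hb
    exact (not_isCross_iff p q b).2 (h b hb)

lemma crossCount_even (hp : Even p) {P : Finset (Finset (Fin (p + q)))}
    (hP : P ∈ pairings (univ : Finset (Fin (p + q)))) :
    Even (P.filter (IsCross p q)).card := by
  obtain ⟨hc, hd, hU⟩ := mem_pairings.1 hP
  have hsum : ∑ b ∈ P, (b ∩ Lft p q).card = p := by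
    rw [sum_card_inter hP (Finset.subset_univ _), card_Lft]
  rw [← Finset.sum_filter_add_sum_filter_not P (IsCross p q)] at hsum
  have h1 : ∑ b ∈ P.filter (IsCross p q), (b ∩ Lft p q).card =
      (P.filter (IsCross p q)).card := by
    rw [Finset.card_eq_sum_ones]
    apply Finset.sum_congr rfl
    intro b hb
    obtain ⟨hbP, hbc⟩ := Finset.mem_filter.1 hb
    obtain ⟨x, y, hx, hy, rfl⟩ := cross_block_struct p q b (hc b hbP) hbc
    have : ({x, y} : Finset (Fin (p + q))) ∩ Lft p q = {x} := by
      ext z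
      simp only [Finset.mem_inter, Finset.mem_insert, Finset.mem_singleton]
      constructor
      · rintro ⟨rfl | rfl, hz⟩
        · rfl
        · rw [mem_Lft] at hz
          rw [mem_Rgt] at hy
          omega
      · rintro rfl
        exact ⟨Or.inl rfl, hx⟩
    rw [this, Finset.card_singleton]
  have h2 : 2 ∣ ∑ b ∈ P.filter (fun b => ¬ IsCross p q b), (b ∩ Lft p q).card := by
    apply Finset.dvd_sum
    intro b hb
    obtain ⟨hbP, hbnc⟩ := Finset.mem_filter.1 hb
    rcases (not_isCross_iff p q b).1 hbnc with h | h
    · rw [Finset.inter_eq_left.2 h, hc b hbP]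
    · have : b ∩ Lft p q = ∅ := by
        rw [← Finset.disjoint_iff_inter_eq_empty]
        exact Finset.disjoint_of_subset_left h (disjoint_Lft_Rgt p q).symm
      rw [this]
      simp
  rw [h1] at hsum
  obtain ⟨m, hm⟩ := h2
  obtain ⟨a, ha⟩ := hp
  exact ⟨(P.filter (IsCross p q)).card / 2, by omega⟩

end Counts

section E2count

variable (p q : ℕ)

lemma E2_eq_biUnion :
    (pairings (univ : Finset (Fin (p + q)))).filter
        (fun P => (P.filter (IsCross p q)).card = 2) =
      (Kset p q).biUnion (Fk p q) := by
  ext P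
  constructor
  · intro hP
    obtain ⟨hPp, hc2⟩ := Finset.mem_filter.1 hP
    obtain ⟨hc, hd, hU⟩ := mem_pairings.1 hPp
    obtain ⟨c1, c2, hne, hCeq⟩ := Finset.card_eq_two.1 hc2
    have hc1 : c1 ∈ P.filter (IsCross p q) := hCeq ▸ Finset.mem_insert_self c1 {c2}
    have hc2' : c2 ∈ P.filter (IsCross p q) :=
      hCeq ▸ Finset.mem_insert_of_mem (Finset.mem_singleton_self c2)
    obtain ⟨hc1P, hc1c⟩ := Finset.mem_filter.1 hc1
    obtain ⟨hc2P, hc2c⟩ := Finset.mem_filter.1 hc2'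
    obtain ⟨x1, y1, hx1, hy1, rfl⟩ := cross_block_struct p q c1 (hc c1 hc1P) hc1c
    obtain ⟨x2, y2, hx2, hy2, rfl⟩ := cross_block_struct p q c2 (hc c2 hc2P) hc2c
    have hdisj := hd _ hc1P _ hc2P hne
    have hx12 : x1 ≠ x2 := by
      rintro rfl
      exact Finset.disjoint_left.1 hdisj (Finset.mem_insert_self _ _)
        (Finset.mem_insert_self _ _)
    have hy12 : y1 ≠ y2 := by
      rintro rfl
      exact Finset.disjoint_left.1 hdisj
        (Finset.mem_insert_of_mem (Finset.mem_singleton_self _))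
        (Finset.mem_insert_of_mem (Finset.mem_singleton_self _))
    rcases hx12.lt_or_gt with hlt | hlt
    · have hk : ((x1, x2), (y1, y2)) ∈ Kset p q :=
        (mem_Kset p q).2 ⟨hx1, hx2, hlt, hy1, hy2, hy12⟩
      exact Finset.mem_biUnion.2 ⟨_, hk, mem_Fk_of p q hk hPp (by rw [hCeq]; rfl)⟩
    · have hk : ((x2, x1), (y2, y1)) ∈ Kset p q :=
        (mem_Kset p q).2 ⟨hx2, hx1, hlt, hy2, hy1, hy12.symm⟩
      refine Finset.mem_biUnion.2 ⟨_, hk, mem_Fk_of p q hk hPp ?_⟩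
      rw [hCeq, Finset.pair_comm]
      rfl
  · intro hP
    obtain ⟨k, hk, hPF⟩ := Finset.mem_biUnion.1 hP
    refine Finset.mem_filter.2 ⟨mem_pairings_of_mem_Fk p q hk hPF, ?_⟩
    rw [filter_isCross_of_mem_Fk p q hk hPF]
    exact (Dk_facts p q hk).2.1

lemma card_Fk {k : Quad p q} (hk : k ∈ Kset p q) (hp : Even p) (hq : Even q)
    (hp2 : 2 ≤ p) (hq2 : 2 ≤ q) :
    (Fk p q k).card =
      Nat.doubleFactorial (p - 3) * Nat.doubleFactorial (q - 3) := by
  obtain ⟨hx1, hx2, hxlt, hy1, hy2, hyne⟩ := (mem_Kset p q).1 hk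
  have hinj : Set.InjOn (· ∪ Dk p q k) (ncp (uSet p q k) (vSet p q k) : Finset _) := by
    intro Q1 h1 Q2 h2 heq
    have key : ∀ Q ∈ ncp (uSet p q k) (vSet p q k),
        (Q ∪ Dk p q k).filter (fun b => ¬ IsCross p q b) = Q := by
      intro Q hQ
      obtain ⟨hQp, hQnc⟩ := mem_ncp.1 hQ
      rw [Finset.filter_union]
      have e1 : Q.filter (fun b => ¬ IsCross p q b) = Q := by
        apply Finset.filter_true_of_mem
        intro b hb
        rw [not_isCross_iff]
        rcases hQnc b hb with h | h
        · exact Or.inl (h.trans (uSet_subset p q k))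
        · exact Or.inr (h.trans (vSet_subset p q k))
      have e2 : (Dk p q k).filter (fun b => ¬ IsCross p q b) = ∅ := by
        rw [Finset.filter_eq_empty_iff]
        intro b hb
        obtain ⟨-, hcross, -⟩ := (Dk_facts p q hk).2.2
        exact fun h => h (hcross b hb)
      rw [e1, e2, Finset.union_empty]
    have heq' : Q1 ∪ Dk p q k = Q2 ∪ Dk p q k := heq
    rw [← key Q1 (by exact_mod_cast h1), ← key Q2 (by exact_mod_cast h2), heq']
  rw [Fk, Finset.card_image_of_injOn hinj,
    card_pairings_nocross _ _ (disjoint_uv p q k)]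
  obtain ⟨a, ha⟩ := hp
  obtain ⟨b, hb⟩ := hq
  have hcu : (uSet p q k).card = 2 * (a - 1) := by
    rw [uSet, Finset.card_erase_of_mem, Finset.card_erase_of_mem hx1, card_Lft]
    · omega
    · exact Finset.mem_erase.2 ⟨hxlt.ne', hx2⟩
  have hcv : (vSet p q k).card = 2 * (b - 1) := by
    rw [vSet, Finset.card_erase_of_mem, Finset.card_erase_of_mem hy1, card_Rgt]
    · omega
    · exact Finset.mem_erase.2 ⟨hyne.symm, hy2⟩
  rw [card_pairings _ _ hcu, card_pairings _ _ hcv]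
  congr 2 <;> omega

lemma card_Kset : (Kset p q).card = p.choose 2 * (q * q - q) := by
  rw [Kset, Finset.card_product, card_filter_lt_product, card_Lft]
  congr 1
  have : ((Rgt p q ×ˢ Rgt p q).filter fun a => a.1 ≠ a.2) = (Rgt p q).offDiag := by
    ext ⟨x, y⟩
    simp [Finset.mem_offDiag, Finset.mem_filter, Finset.mem_product]
    tauto
  rw [this, Finset.offDiag_card, card_Rgt]

lemma card_E2 (hp : Even p) (hq : Even q) (hp2 : 2 ≤ p) (hq2 : 2 ≤ q) :
    ((pairings (univ : Finset (Fin (p + q)))).filter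
        (fun P => (P.filter (IsCross p q)).card = 2)).card =
      p.choose 2 * (q * q - q) *
        (Nat.doubleFactorial (p - 3) * Nat.doubleFactorial (q - 3)) := by
  rw [E2_eq_biUnion, Finset.card_biUnion, ← card_Kset p q]
  · rw [Finset.sum_congr rfl (fun k hk => card_Fk p q hk hp hq hp2 hq2),
      Finset.sum_const, smul_eq_mul]
  · intro k hk k' hk' hne
    rw [Function.onFun_apply, Finset.disjoint_left]
    intro P hP hP'
    apply hne
    apply Dk_inj p q hk hk'
    rw [← filter_isCross_of_mem_Fk p q hk hP, ← filter_isCross_of_mem_Fk p q hk' hP']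

end E2count

section Assembly

lemma arith_identity (c d X Y : ℕ) :
    (1 + (2 * (c + 1)) * (2 * (d + 1)) / 2) * ((2 * c + 1) * X) * ((2 * d + 1) * Y)
      = ((2 * c + 1) * X) * ((2 * d + 1) * Y)
        + (2 * (c + 1)).choose 2 * ((2 * (d + 1)) * (2 * (d + 1)) - 2 * (d + 1)) * (X * Y) := by
  have h1 : (2 * (c + 1)) * (2 * (d + 1)) / 2 = 2 * (c + 1) * (d + 1) := by
    have h : (2 * (c + 1)) * (2 * (d + 1)) = 2 * (2 * (c + 1) * (d + 1)) := by ring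
    rw [h, Nat.mul_div_cancel_left _ (by norm_num)]
  have h2 : (2 * (c + 1)).choose 2 = (c + 1) * (2 * c + 1) := by
    rw [Nat.choose_two_right]
    have h : 2 * (c + 1) - 1 = 2 * c + 1 := by omega
    rw [h]
    have h' : 2 * (c + 1) * (2 * c + 1) = 2 * ((c + 1) * (2 * c + 1)) := by ring
    rw [h', Nat.mul_div_cancel_left _ (by norm_num)]
  have h3 : (2 * (d + 1)) * (2 * (d + 1)) - 2 * (d + 1) = 2 * (d + 1) * (2 * d + 1) := by
    have h : (2 * (d + 1)) * (2 * (d + 1)) = 2 * (d + 1) * (2 * d + 1) + 2 * (d + 1) := by ring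
    omega
  rw [h1, h2, h3]
  ring

variable {β : Type*} [DecidableEq β] [Fintype β]

def toFinpartition {Q : Finset (Finset β)} (hQ : Q ∈ pairings (univ : Finset β)) :
    Finpartition (univ : Finset β) where
  parts := Q
  supIndep := by
    rw [Finset.supIndep_iff_pairwiseDisjoint]
    intro b hb c hc hne
    exact (mem_pairings.1 hQ).2.1 b (Finset.mem_coe.1 hb) c (Finset.mem_coe.1 hc) hne
  sup_parts := by
    rw [Finset.sup_eq_biUnion]
    exact (mem_pairings.1 hQ).2.2
  bot_notMem := by
    intro h
    have := (mem_pairings.1 hQ).1 _ h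
    simp at this

lemma parts_mem_pairings (P : Finpartition (univ : Finset β))
    (h2 : ∀ b ∈ P.parts, b.card = 2) : P.parts ∈ pairings (univ : Finset β) := by
  refine mem_pairings.2 ⟨h2, ?_, ?_⟩
  · intro b hb c hc hne
    exact (Finset.supIndep_iff_pairwiseDisjoint.1 P.supIndep) (Finset.mem_coe.2 hb)
      (Finset.mem_coe.2 hc) hne
  · rw [← Finset.sup_eq_biUnion]
    exact P.sup_parts

end Assembly

/-- For even `p, q ≥ 2`, the number of pair partitions of `{1,...,p+q}` with at least
three crosses equals `(p+q-1)!! - (1 + pq/2)(p-1)!!(q-1)!!`. -/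
theorem count_pair_partitions_ge_three_crosses_even (p q : ℕ)
    (hp : Even p) (hq : Even q) (hp2 : 2 ≤ p) (hq2 : 2 ≤ q) :
    Nat.card {P : Finpartition (Finset.univ : Finset (Fin (p + q))) //
        (∀ b ∈ P.parts, b.card = 2) ∧ 3 ≤ crossCount p q P} =
      Nat.doubleFactorial (p + q - 1) -
        (1 + p * q / 2) * Nat.doubleFactorial (p - 1) * Nat.doubleFactorial (q - 1) := by
  classical
  set s := pairings (univ : Finset (Fin (p + q))) with hs
  set f : Finset (Finset (Fin (p + q))) → ℕ := fun P => (P.filter (IsCross p q)).card with hf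
  -- Bridge to the finset count
  have hbridge : Nat.card {P : Finpartition (Finset.univ : Finset (Fin (p + q))) //
      (∀ b ∈ P.parts, b.card = 2) ∧ 3 ≤ crossCount p q P} =
      (s.filter (fun P => 3 ≤ f P)).card := by
    rw [← Nat.card_eq_finsetCard]
    apply Nat.card_congr
    refine ⟨fun P => ⟨P.1.parts, ?_⟩, fun Q => ⟨toFinpartition (Finset.mem_filter.1 Q.2).1, ?_⟩, ?_, ?_⟩
    · exact Finset.mem_filter.2 ⟨parts_mem_pairings P.1 P.2.1, P.2.2⟩
    · constructor
      · exact fun b hb => (mem_pairings.1 (Finset.mem_filter.1 Q.2).1).1 b hb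
      · exact (Finset.mem_filter.1 Q.2).2
    · intro P
      apply Subtype.ext
      apply Finpartition.ext
      rfl
    · intro Q
      apply Subtype.ext
      rfl
  rw [hbridge]
  -- split the total count
  obtain ⟨a', ha'⟩ := id hp
  obtain ⟨b', hb'⟩ := id hq
  have hpa : p = 2 * a' := by omega
  have hqb : q = 2 * b' := by omega
  have htot : s.card = Nat.doubleFactorial (p + q - 1) := by
    rw [hs, card_pairings (a' + b') _ (by
      rw [Finset.card_univ, Fintype.card_fin]; omega)]
    congr 1
    omega
  have h1 : (s.filter (fun P => f P = 0)).card +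
      (s.filter (fun P => ¬ f P = 0)).card = s.card :=
    Finset.card_filter_add_card_filter_not _
  have h2 : ((s.filter (fun P => ¬ f P = 0)).filter (fun P => f P = 2)).card +
      ((s.filter (fun P => ¬ f P = 0)).filter (fun P => ¬ f P = 2)).card =
      (s.filter (fun P => ¬ f P = 0)).card :=
    Finset.card_filter_add_card_filter_not _
  have e1 : (s.filter (fun P => ¬ f P = 0)).filter (fun P => f P = 2) =
      s.filter (fun P => f P = 2) := by
    ext P
    simp only [Finset.mem_filter]
    constructor
    · rintro ⟨⟨hP, -⟩, h⟩; exact ⟨hP, h⟩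
    · rintro ⟨hP, h⟩; exact ⟨⟨hP, by omega⟩, h⟩
  have e2 : (s.filter (fun P => ¬ f P = 0)).filter (fun P => ¬ f P = 2) =
      s.filter (fun P => 3 ≤ f P) := by
    ext P
    simp only [Finset.mem_filter]
    constructor
    · rintro ⟨⟨hP, h0⟩, h2'⟩
      refine ⟨hP, ?_⟩
      obtain ⟨m, hm⟩ := crossCount_even p q hp hP
      have hm2 : f P = m + m := hm
      omega
    · rintro ⟨hP, h3⟩
      exact ⟨⟨hP, by omega⟩, by omega⟩
  rw [e1, e2] at h2
  -- values of the pieces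
  have hL : (pairings (Lft p q)).card = Nat.doubleFactorial (p - 1) := by
    rw [card_pairings a' _ (by rw [card_Lft]; omega)]
    congr 1
    omega
  have hR : (pairings (Rgt p q)).card = Nat.doubleFactorial (q - 1) := by
    rw [card_pairings b' _ (by rw [card_Rgt]; omega)]
    congr 1
    omega
  have hE0 : (s.filter (fun P => f P = 0)).card =
      Nat.doubleFactorial (p - 1) * Nat.doubleFactorial (q - 1) := by
    rw [hs, hf, card_E0, hL, hR]
  have hE2 : (s.filter (fun P => f P = 2)).card =
      p.choose 2 * (q * q - q) *
        (Nat.doubleFactorial (p - 3) * Nat.doubleFactorial (q - 3)) := by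
    rw [hs, hf]
    exact card_E2 p q hp hq hp2 hq2
  -- the arithmetic identity
  have key : (1 + p * q / 2) * Nat.doubleFactorial (p - 1) * Nat.doubleFactorial (q - 1) =
      Nat.doubleFactorial (p - 1) * Nat.doubleFactorial (q - 1) +
        p.choose 2 * (q * q - q) *
          (Nat.doubleFactorial (p - 3) * Nat.doubleFactorial (q - 3)) := by
    obtain ⟨c, hc⟩ : ∃ c, a' = c + 1 := ⟨a' - 1, by omega⟩
    obtain ⟨d, hd⟩ : ∃ d, b' = d + 1 := ⟨b' - 1, by omega⟩
    have ep : p = 2 * (c + 1) := by omega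
    have eq' : q = 2 * (d + 1) := by omega
    have dfp : Nat.doubleFactorial (p - 1) = (2 * c + 1) * Nat.doubleFactorial (p - 3) := by
      have i1 : p - 1 = (2 * c) + 1 := by omega
      have i2 : 2 * c - 1 = p - 3 := by omega
      rw [i1, Nat.doubleFactorial_add_one, i2]
    have dfq : Nat.doubleFactorial (q - 1) = (2 * d + 1) * Nat.doubleFactorial (q - 3) := by
      have i1 : q - 1 = (2 * d) + 1 := by omega
      have i2 : 2 * d - 1 = q - 3 := by omega
      rw [i1, Nat.doubleFactorial_add_one, i2]
    rw [dfp, dfq, ep, eq']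
    exact arith_identity c d _ _
  omega
end

section
/- Let p and q be odd natural numbers with p,q ≥ 3. The number of pair partitions of {1,...,p+q} with at least three crosses equals (p+q-1)!! - p·q·(p-2)!!·(q-2)!!. -/
open Finset

/-!
The crosses of a pair partition are exactly its blocks meeting `{0, …, p - 1}` in one point, so
their number has the parity of `p`: for odd `p` "at least three crosses" means "not exactly one".
Colour each point by the side it lies on. Pairing a fixed point `a` with one of its partners of
the same colour shows that the pair partitions of `s` all of whose blocks are monochromatic number
`∏ c, (n c - 1)‼`, where `n c` is the size of the colour class `c`. With a single colour this
gives `(p + q - 1)‼` pair partitions in all. Those with exactly one cross `{a, b}` are, once that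
block is removed, the monochromatic pair partitions of the remaining `p - 1` and `q - 1` points,
so there are `p * q * (p - 2)‼ * (q - 2)‼` of them.
-/

open scoped Nat

theorem Finset.exists_eq_pair_of_mem {α : Type*} [DecidableEq α] {t : Finset α} {a : α}
    (ha : a ∈ t) (ht : #t = 2) : ∃ x ∈ t.erase a, t = {a, x} := by
  obtain ⟨x, hx⟩ := card_eq_one.1 (by rw [card_erase_of_mem ha, ht] : #(t.erase a) = 1)
  exact ⟨x, by simp [hx], by rw [← hx, insert_erase ha]⟩

section Colouring

variable {α β : Type*} (f : α → β)

def IsMonochromatic (b : Finset α) : Prop :=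
  ∀ x ∈ b, ∀ y ∈ b, f x = f y

instance [DecidableEq β] : DecidablePred (IsMonochromatic f) := fun b => by
  unfold IsMonochromatic; infer_instance

variable [DecidableEq α] {f}

theorem isMonochromatic_pair_iff {a x : α} : IsMonochromatic f {a, x} ↔ f x = f a := by
  simp only [IsMonochromatic, mem_insert, mem_singleton, forall_eq_or_imp, forall_eq]
  exact ⟨fun h => h.2.1, fun h => ⟨⟨trivial, h.symm⟩, h, trivial⟩⟩

theorem card_filter_sdiff_pair [DecidableEq β] {s : Finset α} {a x : α} (ha : a ∈ s)
    (hx : x ∈ s) (hxa : x ≠ a) (hfx : f x = f a) (c : β) :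
    #{y ∈ s \ {a, x} | f y = c} =
      if c = f a then #{y ∈ s | f y = f a} - 2 else #{y ∈ s | f y = c} := by
  split_ifs with hc
  · subst hc
    have hsub : {a, x} ⊆ {y ∈ s | f y = f a} := by simp [insert_subset_iff, ha, hx, hfx]
    have hdiff : {y ∈ s \ {a, x} | f y = f a} = {y ∈ s | f y = f a} \ {a, x} := by
      ext y
      simp only [mem_filter, mem_sdiff]
      tauto
    rw [hdiff, card_sdiff_of_subset hsub, card_pair hxa.symm]
  · congr 1
    ext y
    simp only [mem_filter, mem_sdiff, mem_insert, mem_singleton]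
    grind

theorem filter_erase_isMonochromatic_pair [DecidableEq β] {s : Finset α} {a : α} :
    {x ∈ s.erase a | #{a, x} = 2 ∧ IsMonochromatic f {a, x}} =
      {x ∈ s | f x = f a}.erase a := by
  ext x
  simp only [mem_filter, mem_erase, isMonochromatic_pair_iff]
  constructor
  · rintro ⟨⟨hxa, hxs⟩, -, hfx⟩
    exact ⟨hxa, hxs, hfx⟩
  · rintro ⟨hxa, hxs, hfx⟩
    exact ⟨⟨hxa, hxs⟩, card_pair hxa.symm, hfx⟩

end Colouring

namespace Finpartition

variable {α : Type*} [DecidableEq α] {s c : Finset α}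

theorem avoid_parts_of_mem (P : Finpartition s) (hc : c ∈ P.parts) :
    (P.avoid c).parts = P.parts.erase c := by
  ext d
  rw [mem_avoid, mem_erase]
  constructor
  · rintro ⟨e, he, hec, rfl⟩
    have hne : e ≠ c := by rintro rfl; exact hec le_rfl
    have hdisj : Disjoint e c := P.disjoint he hc hne
    rw [sdiff_eq_self_of_disjoint hdisj]
    exact ⟨hne, he⟩
  · rintro ⟨hdc, hd⟩
    have hdisj : Disjoint d c := P.disjoint hd hc hdc
    exact ⟨d, hd, fun hle => P.ne_bot hd (hdisj.eq_bot_of_le hle),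
      sdiff_eq_self_of_disjoint hdisj⟩

theorem notMem_parts_of_sdiff (Q : Finpartition (s \ c)) (hc : c.Nonempty) : c ∉ Q.parts := by
  intro h
  obtain ⟨x, hx⟩ := hc
  exact (mem_sdiff.1 (Q.le h hx)).2 hx

theorem card_filter_mem_parts (hcs : c ⊆ s) (hc : c.Nonempty)
    (G : Finset α → Prop) [DecidablePred G] :
    #{P : Finpartition s | c ∈ P.parts ∧ ∀ b ∈ P.parts.erase c, G b} =
      #{Q : Finpartition (s \ c) | ∀ b ∈ Q.parts, G b} := by
  have hsup : (s \ c) ⊔ c = s := sdiff_union_of_subset hcs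
  refine card_nbij' (fun P => P.avoid c) (fun Q => Q.extend hc.ne_empty sdiff_disjoint hsup)
    ?_ ?_ ?_ ?_
  · intro P hP
    simp only [coe_filter, mem_univ, true_and, Set.mem_ofPred_eq] at hP ⊢
    rw [avoid_parts_of_mem P hP.1]
    exact hP.2
  · intro Q hQ
    simp only [coe_filter, mem_univ, true_and, Set.mem_ofPred_eq, extend_parts] at hQ ⊢
    rw [erase_insert (Q.notMem_parts_of_sdiff hc)]
    exact ⟨mem_insert_self c _, hQ⟩
  · intro P hP
    simp only [coe_filter, mem_univ, true_and, Set.mem_ofPred_eq] at hP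
    ext1
    rw [extend_parts, avoid_parts_of_mem P hP.1, insert_erase hP.1]
  · intro Q _
    ext1
    rw [avoid_parts_of_mem _ (by simp), extend_parts, erase_insert (Q.notMem_parts_of_sdiff hc)]

theorem card_filter_forall_parts_eq_sum {G : Finset α → Prop} [DecidablePred G]
    (hG : ∀ b, G b → #b = 2) {a : α} (ha : a ∈ s) :
    #{P : Finpartition s | ∀ b ∈ P.parts, G b} =
      ∑ x ∈ s.erase a with G {a, x},
        #{Q : Finpartition (s \ {a, x}) | ∀ b ∈ Q.parts, G b} := by
  have hmaps : ∀ P ∈ ({P : Finpartition s | ∀ b ∈ P.parts, G b} : Finset _),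
      P.part a ∈ ({x ∈ s.erase a | G {a, x}} : Finset α).image fun x => {a, x} := by
    intro P hP
    rw [mem_filter] at hP
    have hGa := hP.2 _ (P.part_mem.2 ha)
    obtain ⟨x, hx, hax⟩ := exists_eq_pair_of_mem (P.mem_part ha) (hG _ hGa)
    refine mem_image.2 ⟨x, mem_filter.2 ⟨?_, hax ▸ hGa⟩, hax.symm⟩
    exact mem_erase.2 ⟨ne_of_mem_erase hx, P.part_subset a (mem_of_mem_erase hx)⟩
  have hinj :
      Set.InjOn (fun x => ({a, x} : Finset α)) ({x ∈ s.erase a | G {a, x}} : Finset α) := by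
    intro x hx y _ hxy
    have : x ∈ ({a, y} : Finset α) := by
      rw [← show ({a, x} : Finset α) = {a, y} from hxy]
      exact mem_insert_of_mem (mem_singleton_self x)
    simpa [ne_of_mem_erase (mem_filter.1 hx).1] using this
  rw [card_eq_sum_card_fiberwise hmaps, sum_image hinj]
  refine sum_congr rfl fun x hx => ?_
  obtain ⟨hxs, hGx⟩ := mem_filter.1 hx
  rw [← card_filter_mem_parts (insert_subset ha (singleton_subset_iff.2 (mem_of_mem_erase hxs)))
    (insert_nonempty a {x}) G, filter_filter]
  refine congrArg card (filter_congr fun P _ => ?_)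
  constructor
  · rintro ⟨hall, hpart⟩
    exact ⟨hpart ▸ P.part_mem.2 ha, fun b hb => hall b (mem_of_mem_erase hb)⟩
  · rintro ⟨hmem, hrest⟩
    refine ⟨fun b hb => ?_, P.part_eq_of_mem hmem (mem_insert_self a _)⟩
    by_cases hbx : b = {a, x}
    · exact hbx ▸ hGx
    · exact hrest b (mem_erase.2 ⟨hbx, hb⟩)

/-- An empty colour class contributes `(0 - 1)‼ = 0‼ = 1`, matching `(-1)‼ = 1`. -/
theorem card_filter_forall_isMonochromatic {β : Type*} [Fintype β] [DecidableEq β]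
    (f : α → β) (s : Finset α) (hs : ∀ c, Even #{x ∈ s | f x = c}) :
    #{P : Finpartition s | ∀ b ∈ P.parts, #b = 2 ∧ IsMonochromatic f b} =
      ∏ c, (#{x ∈ s | f x = c} - 1)‼ := by
  induction s using Finset.strongInduction with
  | H s ih =>
  rcases s.eq_empty_or_nonempty with rfl | ⟨a, ha⟩
  · simp only [parts_eq_empty_iff.2 (rfl : (∅ : Finset α) = ⊥), notMem_empty,
      IsEmpty.forall_iff, implies_true, filter_true, card_univ, filter_empty, card_empty,
      zero_tsub, Nat.doubleFactorial, prod_const_one]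
    exact @Fintype.card_unique (Finpartition (⊥ : Finset α)) _ _
  obtain ⟨k, hk⟩ : ∃ k, #{x ∈ s | f x = f a} = k + 2 := by
    have hpos : 0 < #{x ∈ s | f x = f a} := card_pos.2 ⟨a, by simp [ha]⟩
    obtain ⟨m, hm⟩ := hs (f a)
    exact ⟨#{x ∈ s | f x = f a} - 2, by omega⟩
  have hterm : ∀ x ∈ {x ∈ s | f x = f a}.erase a,
      #{Q : Finpartition (s \ {a, x}) | ∀ b ∈ Q.parts, #b = 2 ∧ IsMonochromatic f b} =
        (k - 1)‼ * ∏ c ∈ {f a}ᶜ, (#{y ∈ s | f y = c} - 1)‼ := by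
    intro x hx
    obtain ⟨hxa, hxs, hfx⟩ : x ≠ a ∧ x ∈ s ∧ f x = f a := by simpa using hx
    have hclass := card_filter_sdiff_pair ha hxs hxa hfx
    have hsub : s \ {a, x} ⊂ s :=
      sdiff_ssubset (insert_subset ha (singleton_subset_iff.2 hxs)) (insert_nonempty a {x})
    rw [ih _ hsub fun c => ?_, Fintype.prod_eq_mul_prod_compl (f a)]
    · simp_rw [hclass, hk, Nat.add_sub_cancel]
      refine congrArg _ (prod_congr rfl fun c hc => ?_)
      rw [if_neg (by simpa using hc)]
    · rw [hclass]
      split_ifs with hc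
      · obtain ⟨m, hm⟩ := hs (f a)
        exact ⟨m - 1, by omega⟩
      · exact hs c
  rw [card_filter_forall_parts_eq_sum (fun b hb => hb.1) ha, filter_erase_isMonochromatic_pair,
    sum_congr rfl hterm, sum_const, card_erase_of_mem (by simp [ha]), hk,
    Fintype.prod_eq_mul_prod_compl (f a), hk, smul_eq_mul, ← mul_assoc,
    show k + 2 - 1 = k + 1 by omega, ← Nat.doubleFactorial_add_one]

/-- Stated with `Nat.card`, which involves no decidability instance: for a fintype `α`,
`∀ b ∈ P.parts, _` is decided by `Fintype.decidableForallFintype`, not by the instance above. -/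
theorem card_pairPartitions (hs : Even #s) :
    Nat.card {P : Finpartition s // ∀ b ∈ P.parts, #b = 2} = (#s - 1)‼ := by
  have h := card_filter_forall_isMonochromatic (fun _ => ()) s fun _ => by simpa using hs
  simp only [IsMonochromatic, implies_true, and_true, filter_true, Fintype.prod_unique] at h
  rw [Nat.card_eq_fintype_card, Fintype.card_subtype, h]

theorem odd_card_filter_iff (P : Finpartition s) (π : α → Prop) [DecidablePred π] :
    Odd #{x ∈ s | π x} ↔ Odd #{b ∈ P.parts | Odd #{x ∈ b | π x}} := by
  rw [← odd_sum_iff_odd_card_odd, ← (P.restrict (filter_subset π s)).sum_card_parts,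
    P.sum_restrict (filter_subset π s) card card_empty]
  refine Iff.of_eq (congrArg Odd (sum_congr rfl fun b hb => ?_))
  rw [inf_eq_inter, inter_filter, inter_eq_left.2 (P.le hb)]

section TwoColouring

variable (f : α → Bool)

theorem not_isMonochromatic_iff_odd {b : Finset α} (hb : #b = 2) :
    ¬IsMonochromatic f b ↔ Odd #{x ∈ b | f x = true} := by
  obtain ⟨x, y, hxy, rfl⟩ := card_eq_two.1 hb
  rw [isMonochromatic_pair_iff, filter_insert, filter_singleton]
  cases hx : f x <;> cases hy : f y <;> simp [hxy]

theorem odd_card_filter_not_isMonochromatic {P : Finpartition s} (hP : ∀ b ∈ P.parts, #b = 2) :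
    Odd #{b ∈ P.parts | ¬IsMonochromatic f b} ↔ Odd #{x ∈ s | f x = true} := by
  rw [P.odd_card_filter_iff, filter_congr fun b hb => not_isMonochromatic_iff_odd f (hP b hb)]

def bichromaticPairs (s : Finset α) : Finset (Finset α) :=
  ({x ∈ s | f x = true} ×ˢ {x ∈ s | f x = false}).image fun ab => {ab.1, ab.2}

variable {f}

theorem mem_bichromaticPairs :
    c ∈ bichromaticPairs f s ↔ c ⊆ s ∧ #c = 2 ∧ ¬IsMonochromatic f c := by
  simp only [bichromaticPairs, mem_image, Prod.exists, mem_product, mem_filter]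
  constructor
  · rintro ⟨a, b, ⟨⟨has, hfa⟩, hbs, hfb⟩, rfl⟩
    have hba : b ≠ a := by rintro rfl; simp_all
    refine ⟨insert_subset has (singleton_subset_iff.2 hbs), card_pair hba.symm, ?_⟩
    rw [isMonochromatic_pair_iff, hfa, hfb]
    decide
  · rintro ⟨hcs, hc2, hmono⟩
    simp only [IsMonochromatic, not_forall] at hmono
    obtain ⟨x, hx, y, hy, hxy⟩ := hmono
    have hpair : ∀ {u v}, u ∈ c → v ∈ c → u ≠ v → c = {u, v} := fun hu hv huv =>
      (eq_of_subset_of_card_le (insert_subset hu (singleton_subset_iff.2 hv))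
        (by rw [hc2, card_pair huv])).symm
    have hne : x ≠ y := by rintro rfl; exact hxy rfl
    cases hfx : f x
    · exact ⟨y, x, ⟨⟨hcs hy, by simpa [hfx] using Ne.symm hxy⟩, hcs hx, hfx⟩,
        (hpair hy hx hne.symm).symm⟩
    · exact ⟨x, y, ⟨⟨hcs hx, hfx⟩, hcs hy, by simpa [hfx] using Ne.symm hxy⟩,
        (hpair hx hy hne).symm⟩

theorem card_bichromaticPairs :
    #(bichromaticPairs f s) = #{x ∈ s | f x = true} * #{x ∈ s | f x = false} := by
  rw [bichromaticPairs, card_image_of_injOn, card_product]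
  rintro ⟨a, b⟩ hab ⟨a', b'⟩ hab' h
  simp only [coe_product, coe_filter, Set.mem_prod, Set.mem_ofPred_eq] at hab hab'
  rw [← coe_inj, coe_pair, coe_pair, Set.pair_eq_pair_iff] at h
  rcases h with ⟨rfl, rfl⟩ | ⟨rfl, -⟩
  · rfl
  · simp_all

theorem card_filter_mem_parts_of_mem_bichromaticPairs (hc : c ∈ bichromaticPairs f s)
    (htrue : Odd #{x ∈ s | f x = true}) (hfalse : Odd #{x ∈ s | f x = false}) :
    #{P : Finpartition s |
        c ∈ P.parts ∧ ∀ b ∈ P.parts.erase c, #b = 2 ∧ IsMonochromatic f b} =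
      (#{x ∈ s | f x = true} - 2)‼ * (#{x ∈ s | f x = false} - 2)‼ := by
  simp only [bichromaticPairs, mem_image, Prod.exists, mem_product, mem_filter] at hc
  obtain ⟨a, b, ⟨⟨has, hfa⟩, hbs, hfb⟩, rfl⟩ := hc
  have hclass : ∀ t, #{x ∈ s \ {a, b} | f x = t} = #{x ∈ s | f x = t} - 1 := by
    intro t
    obtain ⟨e, he, hdiff⟩ : ∃ e ∈ ({x ∈ s | f x = t} : Finset α),
        {x ∈ s \ {a, b} | f x = t} = {x ∈ s | f x = t}.erase e := by
      cases t
      · exact ⟨b, mem_filter.2 ⟨hbs, hfb⟩, by ext; simp only [mem_filter, mem_sdiff,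
          mem_insert, mem_singleton, mem_erase]; grind⟩
      · exact ⟨a, mem_filter.2 ⟨has, hfa⟩, by ext; simp only [mem_filter, mem_sdiff,
          mem_insert, mem_singleton, mem_erase]; grind⟩
    rw [hdiff, card_erase_of_mem he]
  have hab : {a, b} ⊆ s := insert_subset has (singleton_subset_iff.2 hbs)
  rw [card_filter_mem_parts hab (insert_nonempty a {b}),
    card_filter_forall_isMonochromatic f _ fun t => ?_, Fintype.prod_bool, hclass, hclass,
    Nat.sub_sub, Nat.sub_sub]
  rw [hclass]
  cases t
  · exact Nat.Odd.sub_odd hfalse odd_one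
  · exact Nat.Odd.sub_odd htrue odd_one

theorem filter_card_filter_not_isMonochromatic_eq_one :
    ({P : Finpartition s |
        (∀ b ∈ P.parts, #b = 2) ∧ #{b ∈ P.parts | ¬IsMonochromatic f b} = 1} : Finset _) =
      (bichromaticPairs f s).biUnion fun c =>
        {P | c ∈ P.parts ∧ ∀ b ∈ P.parts.erase c, #b = 2 ∧ IsMonochromatic f b} := by
  ext P
  simp only [mem_filter, mem_univ, true_and, mem_biUnion, card_eq_one]
  constructor
  · rintro ⟨hpair, c, hc⟩
    have hcP : c ∈ P.parts ∧ ¬IsMonochromatic f c := mem_filter.1 (hc ▸ mem_singleton_self c)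
    refine ⟨c, mem_bichromaticPairs.2 ⟨P.le hcP.1, hpair c hcP.1, hcP.2⟩, hcP.1,
      fun b hb => ?_⟩
    refine ⟨hpair b (mem_of_mem_erase hb), not_not.1 fun hmono => ne_of_mem_erase hb ?_⟩
    rw [← mem_singleton, ← hc]
    exact mem_filter.2 ⟨mem_of_mem_erase hb, hmono⟩
  · rintro ⟨c, hc, hcP, hrest⟩
    obtain ⟨-, hc2, hcmono⟩ := mem_bichromaticPairs.1 hc
    refine ⟨fun b hb => ?_, c, ?_⟩
    · by_cases hbc : b = c
      · exact hbc ▸ hc2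
      · exact (hrest b (mem_erase.2 ⟨hbc, hb⟩)).1
    · ext b
      simp only [mem_filter, mem_singleton]
      constructor
      · rintro ⟨hb, hbmono⟩
        by_contra hbc
        exact hbmono (hrest b (mem_erase.2 ⟨hbc, hb⟩)).2
      · rintro rfl
        exact ⟨hcP, hcmono⟩

theorem card_pairPartitions_card_filter_not_isMonochromatic_eq_one
    (htrue : Odd #{x ∈ s | f x = true}) (hfalse : Odd #{x ∈ s | f x = false}) :
    Nat.card {P : Finpartition s //
        (∀ b ∈ P.parts, #b = 2) ∧ #{b ∈ P.parts | ¬IsMonochromatic f b} = 1} =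
      #{x ∈ s | f x = true} * #{x ∈ s | f x = false} *
        (#{x ∈ s | f x = true} - 2)‼ * (#{x ∈ s | f x = false} - 2)‼ := by
  rw [Nat.card_eq_fintype_card, Fintype.card_subtype, filter_card_filter_not_isMonochromatic_eq_one,
    card_biUnion ?_, sum_congr rfl fun c hc =>
      card_filter_mem_parts_of_mem_bichromaticPairs hc htrue hfalse,
    sum_const, card_bichromaticPairs, smul_eq_mul, mul_assoc (_ * _)]
  intro c _ d hd hcd
  rw [Function.onFun, disjoint_left]
  intro P hPc hPd
  have hdP := (mem_filter.1 hPd).2.1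
  exact (mem_bichromaticPairs.1 hd).2.2
    ((mem_filter.1 hPc).2.2 d (mem_erase.2 ⟨Ne.symm hcd, hdP⟩)).2

end TwoColouring

end Finpartition

section Crosses

variable {p q : ℕ}

def side (p q : ℕ) (i : Fin (p + q)) : Bool := (i : ℕ) < p

theorem card_filter_side_eq_true : #{i : Fin (p + q) | side p q i = true} = p := by
  simp [side, Fin.card_filter_val_lt]

theorem card_filter_side_eq_false : #{i : Fin (p + q) | side p q i = false} = q := by
  have h := card_filter_add_card_filter_not (s := (univ : Finset (Fin (p + q))))
    (side p q · = true)
  simp only [card_filter_side_eq_true, Bool.not_eq_true, card_univ, Fintype.card_fin] at h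
  omega

theorem isCross_iff_not_isMonochromatic {b : Finset (Fin (p + q))} :
    IsCross p q b ↔ ¬IsMonochromatic (side p q) b := by
  simp only [IsCross, IsMonochromatic, side, not_forall, decide_eq_decide]
  constructor
  · rintro ⟨⟨i, hi, hip⟩, j, hj, hjp⟩
    exact ⟨i, hi, j, hj, by omega⟩
  · rintro ⟨i, hi, j, hj, hij⟩
    by_cases hip : (i : ℕ) < p
    · exact ⟨⟨i, hi, hip⟩, j, hj, by omega⟩
    · exact ⟨⟨j, hj, by omega⟩, i, hi, by omega⟩

theorem crossCount_eq_card_filter_not_isMonochromatic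
    (P : Finpartition (univ : Finset (Fin (p + q)))) :
    crossCount p q P = #{b ∈ P.parts | ¬IsMonochromatic (side p q) b} :=
  congrArg card (filter_congr fun _ _ => isCross_iff_not_isMonochromatic)

theorem odd_crossCount (hp : Odd p) {P : Finpartition (univ : Finset (Fin (p + q)))}
    (hP : ∀ b ∈ P.parts, #b = 2) : Odd (crossCount p q P) := by
  rw [crossCount_eq_card_filter_not_isMonochromatic,
    Finpartition.odd_card_filter_not_isMonochromatic _ hP, card_filter_side_eq_true]
  exact hp

end Crosses

theorem count_pair_partitions_ge_three_crosses_odd_general (p q : ℕ)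
    (hp : Odd p) (hq : Odd q) :
    Nat.card {P : Finpartition (Finset.univ : Finset (Fin (p + q))) //
        (∀ b ∈ P.parts, b.card = 2) ∧ 3 ≤ crossCount p q P} =
      Nat.doubleFactorial (p + q - 1) -
        p * q * Nat.doubleFactorial (p - 2) * Nat.doubleFactorial (q - 2) := by
  have hpairs := Finpartition.card_pairPartitions (s := (univ : Finset (Fin (p + q))))
    (by simpa using hp.add_odd hq)
  have hone := Finpartition.card_pairPartitions_card_filter_not_isMonochromatic_eq_one
    (s := univ) (f := side p q) (by rwa [card_filter_side_eq_true])
    (by rwa [card_filter_side_eq_false])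
  simp_rw [card_filter_side_eq_true, card_filter_side_eq_false, card_univ, Fintype.card_fin,
    ← crossCount_eq_card_filter_not_isMonochromatic] at hpairs hone
  rw [← hpairs, ← hone]
  simp only [Nat.card_eq_fintype_card, Fintype.card_subtype]
  rw [← card_sdiff_of_subset (monotone_filter_right _ fun _ _ => And.left)]
  refine congrArg card (ext fun P => ?_)
  simp only [mem_filter, mem_sdiff, mem_univ, true_and, not_and]
  refine and_congr_right fun hP => ?_
  obtain ⟨k, hk⟩ := odd_crossCount hp hP
  rw [imp_iff_right hP]
  omega

/-- For odd `p, q ≥ 3`, the number of pair partitions of `{1,...,p+q}` with at least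
three crosses equals `(p+q-1)!! - pq(p-2)!!(q-2)!!`. -/
theorem count_pair_partitions_ge_three_crosses_odd (p q : ℕ)
    (hp : Odd p) (hq : Odd q) (hp3 : 3 ≤ p) (hq3 : 3 ≤ q) :
    Nat.card {P : Finpartition (Finset.univ : Finset (Fin (p + q))) //
        (∀ b ∈ P.parts, b.card = 2) ∧ 3 ≤ crossCount p q P} =
      Nat.doubleFactorial (p + q - 1) -
        p * q * Nat.doubleFactorial (p - 2) * Nat.doubleFactorial (q - 2) :=
  count_pair_partitions_ge_three_crosses_odd_general p q hp hq
end

section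
/- Let p and q be even natural numbers with p,q ≥ 2. The number of pair partitions of {1,...,p+q} with exactly two crosses equals 2·C(p,2)·C(q,2)·(p-3)!!·(q-3)!! = (pq/2)·(p-1)!!·(q-1)!!. -/
open Finset

variable {α : Type*} [DecidableEq α]

/-- `f` is a fixed-point-free involution supported on `s`. -/
def IsPairing (s : Finset α) (f : α → α) : Prop :=
  Function.Involutive f ∧ (∀ x ∈ s, f x ≠ x ∧ f x ∈ s) ∧ ∀ x ∉ s, f x = x

lemma nat_card_sigma {A : Type*} [Fintype A] {F : A → Type*} [∀ a, Finite (F a)] :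
    Nat.card (Σ a, F a) = ∑ a : A, Nat.card (F a) := by
  classical
  letI : ∀ a, Fintype (F a) := fun a => Fintype.ofFinite _
  rw [Nat.card_eq_fintype_card, Fintype.card_sigma]
  exact Finset.sum_congr rfl fun a _ => (Nat.card_eq_fintype_card).symm

lemma pairing_extend {s : Finset α} {a b : α} (ha : a ∈ s) (hb : b ∈ s) (hba : b ≠ a)
    {g : α → α} (hg : IsPairing ((s.erase a).erase b) g) :
    IsPairing s (fun x => if x = a then b else if x = b then a else g x) := by
  obtain ⟨ginv, gmem, gfix⟩ := hg
  have hgne : ∀ x, x ≠ a → x ≠ b → g x ≠ a ∧ g x ≠ b ∧ (x ∈ s → g x ∈ s) ∧ (x ∉ s → g x = x) := by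
    intro x hxa hxb
    by_cases hx : x ∈ (s.erase a).erase b
    · have h2 := (gmem x hx).2
      rw [Finset.mem_erase, Finset.mem_erase] at h2
      exact ⟨h2.2.1, h2.1, fun _ => h2.2.2, fun hxs => absurd ((Finset.mem_erase.1 (Finset.mem_erase.1 hx).2).2) hxs⟩
    · have hgx : g x = x := gfix x hx
      rw [hgx]
      exact ⟨hxa, hxb, fun h => h, fun _ => rfl⟩
  refine ⟨fun x => ?_, fun x hx => ?_, fun x hx => ?_⟩ <;> beta_reduce
  · by_cases hxa : x = a
    · subst hxa; simp [if_neg hba, hba]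
    · by_cases hxb : x = b
      · subst hxb; simp [hba]
      · obtain ⟨h1, h2, -⟩ := hgne x hxa hxb
        simp only [if_neg hxa, if_neg hxb, if_neg h1, if_neg h2, ginv x]
  · by_cases hxa : x = a
    · subst hxa; simp only [if_pos rfl]; exact ⟨hba, hb⟩
    · by_cases hxb : x = b
      · subst hxb
        simp only [if_neg hxa, if_pos rfl]
        exact ⟨fun h => hxa h.symm, ha⟩
      · obtain ⟨-, -, h3, -⟩ := hgne x hxa hxb
        simp only [if_neg hxa, if_neg hxb]
        refine ⟨(gmem x ?_).1, h3 hx⟩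
        rw [Finset.mem_erase, Finset.mem_erase]
        exact ⟨hxb, hxa, hx⟩
  · have hxa : x ≠ a := fun h => hx (h ▸ ha)
    have hxb : x ≠ b := fun h => hx (h ▸ hb)
    simp only [if_neg hxa, if_neg hxb]
    exact (hgne x hxa hxb).2.2.2 hx

lemma pairing_restrict {s : Finset α} {a : α} (ha : a ∈ s) {f : α → α} (hf : IsPairing s f) :
    IsPairing ((s.erase a).erase (f a)) (fun x => if x = a ∨ x = f a then x else f x) := by
  obtain ⟨hinv, hmem, hfix⟩ := hf
  have hfa : f a ≠ a := (hmem a ha).1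
  have hmove : ∀ x, ¬(x = a ∨ x = f a) → ¬(f x = a ∨ f x = f a) := by
    intro x hx hfx
    rcases hfx with h | h
    · exact hx (Or.inr (by rw [← h, hinv x]))
    · exact hx (Or.inl (hinv.injective h))
  refine ⟨fun x => ?_, fun x hx => ?_, fun x hx => ?_⟩ <;> beta_reduce
  · by_cases h : x = a ∨ x = f a
    · simp only [if_pos h, if_pos h]
    · simp only [if_neg h, if_neg (hmove x h), hinv x]
  · rw [Finset.mem_erase, Finset.mem_erase] at hx
    obtain ⟨hxfa, hxa, hxs⟩ := hx
    have h : ¬(x = a ∨ x = f a) := by tauto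
    rw [if_neg h]
    refine ⟨(hmem x hxs).1, ?_⟩
    rw [Finset.mem_erase, Finset.mem_erase]
    refine ⟨?_, ?_, (hmem x hxs).2⟩
    · intro hcon; exact hxa (hinv.injective (by rw [hcon]))
    · intro hcon; exact hxfa (by rw [← hcon, hinv x])
  · by_cases h : x = a ∨ x = f a
    · simp only [if_pos h]
    · rw [if_neg h]
      rw [Finset.mem_erase, Finset.mem_erase] at hx
      push_neg at h
      apply hfix
      intro hxs
      exact absurd ⟨h.2, h.1, hxs⟩ hx

theorem card_pairings_s5 [Fintype α] : ∀ (m : ℕ) (s : Finset α), s.card = m → Even m →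
    Nat.card {f : α → α // IsPairing s f} = Nat.doubleFactorial (m - 1) := by
  intro m
  induction m using Nat.strong_induction_on with
  | _ m ih =>
    intro s hcard hm
    rcases Nat.eq_zero_or_pos m with hm0 | hmpos
    · subst hm0
      rw [Finset.card_eq_zero] at hcard
      subst hcard
      have h1 : Nat.card {f : α → α // IsPairing ∅ f} = 1 := by
        rw [Nat.card_eq_one_iff_unique]
        constructor
        · constructor
          intro ⟨f, hf⟩ ⟨g, hg⟩
          ext x
          simp only
          rw [hf.2.2 x (by simp), hg.2.2 x (by simp)]
        · exact ⟨⟨id, ⟨fun x => rfl, fun x hx => absurd hx (by simp), fun x _ => rfl⟩⟩⟩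
      simpa using h1
    · have hsne : s.Nonempty := by rw [← Finset.card_pos, hcard]; exact hmpos
      obtain ⟨a, ha⟩ := hsne
      have key : {f : α → α // IsPairing s f} ≃
          Σ b : {b : α // b ∈ s.erase a}, {g : α → α // IsPairing ((s.erase a).erase b.1) g} := by
        refine Equiv.mk
          (fun f => ⟨⟨f.1 a, Finset.mem_erase.2 ⟨(f.2.2.1 a ha).1, (f.2.2.1 a ha).2⟩⟩,
            ⟨fun x => if x = a ∨ x = f.1 a then x else f.1 x, pairing_restrict ha f.2⟩⟩)
          (fun z => ⟨fun x => if x = a then z.1.1 else if x = z.1.1 then a else z.2.1 x, by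
            obtain ⟨hba, hbs⟩ := Finset.mem_erase.1 z.1.2
            exact pairing_extend ha hbs hba z.2.2⟩)
          ?_ ?_
        · rintro ⟨f, hf⟩
          obtain ⟨hinv, hmem, hfix⟩ := hf
          ext x
          simp only
          by_cases hxa : x = a
          · subst hxa; simp
          · by_cases hxfa : x = f a
            · subst hxfa
              simp only [if_neg hxa, if_pos rfl]
              exact (hinv a).symm
            · simp only [if_neg hxa, if_neg hxfa]
              rw [if_neg (by tauto)]
        · rintro ⟨⟨b, hb⟩, ⟨g, hg⟩⟩
          obtain ⟨hba, hbs⟩ := Finset.mem_erase.1 hb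
          obtain ⟨ginv, gmem, gfix⟩ := hg
          dsimp only
          have hFa : (if a = a then b else if a = b then a else g a) = b := by simp
          apply Sigma.ext
          · exact Subtype.ext (by simpa using hFa)
          · rw [Subtype.heq_iff_coe_eq (fun x => by dsimp only; rw [hFa])]
            funext x
            show (if x = a ∨ x = (if a = a then b else if a = b then a else g a) then x
                else (if x = a then b else if x = b then a else g x)) = g x
            rw [hFa]
            by_cases hxa : x = a
            · rw [if_pos (Or.inl hxa), hxa]
              exact (gfix a (by simp)).symm
            · by_cases hxb : x = b
              · rw [if_pos (Or.inr hxb), hxb]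
                exact (gfix b (by simp)).symm
              · have h : ¬(x = a ∨ x = b) := by tauto
                rw [if_neg h, if_neg hxa, if_neg hxb]
      rw [Nat.card_congr key, nat_card_sigma]
      obtain ⟨k, hk⟩ := hm
      have step : ∀ b : {b : α // b ∈ s.erase a},
          Nat.card {g : α → α // IsPairing ((s.erase a).erase b.1) g}
            = Nat.doubleFactorial (m - 3) := by
        rintro ⟨b, hb⟩
        have hc : ((s.erase a).erase b).card = m - 2 := by
          rw [Finset.card_erase_of_mem hb, Finset.card_erase_of_mem ha, hcard]
          omega
        have heven : Even (m - 2) := ⟨k - 1, by omega⟩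
        rw [ih (m - 2) (by omega) _ hc heven]
        congr 1
      rw [Finset.sum_congr rfl (fun b _ => step b), Finset.sum_const, Finset.card_univ,
        Fintype.card_coe, Finset.card_erase_of_mem ha, hcard, smul_eq_mul]
      rcases Nat.lt_or_ge m 3 with h3 | h3
      · interval_cases m
        · omega
        · simp [Nat.doubleFactorial]
      · have hmm : m - 1 = (m - 3) + 2 := by omega
        rw [hmm, Nat.doubleFactorial]

section PartnerSection

variable {n : ℕ}

/-- The partner of `x` in a pair partition. -/
noncomputable def partnerFun (P : Finpartition (univ : Finset (Fin n))) : Fin n → Fin n :=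
  fun x => if h : ((P.part x).erase x).Nonempty then ((P.part x).erase x).min' h else x

lemma part_eq_pair (P : Finpartition (univ : Finset (Fin n))) (hP : ∀ b ∈ P.parts, b.card = 2)
    (x : Fin n) : partnerFun P x ≠ x ∧ P.part x = {x, partnerFun P x} := by
  have hmem : x ∈ P.part x := P.mem_part (mem_univ x)
  have hcard : (P.part x).card = 2 := hP _ (P.part_mem.2 (mem_univ x))
  have hec : ((P.part x).erase x).card = 1 := by
    rw [Finset.card_erase_of_mem hmem, hcard]
  obtain ⟨y, hy⟩ := Finset.card_eq_one.1 hec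
  have hne : ((P.part x).erase x).Nonempty := by rw [hy]; exact ⟨y, mem_singleton_self y⟩
  have hval : partnerFun P x = y := by
    rw [partnerFun, dif_pos hne]
    simp [hy]
  have hyx : y ≠ x := by
    have : y ∈ (P.part x).erase x := by rw [hy]; exact mem_singleton_self y
    exact (Finset.mem_erase.1 this).1
  refine ⟨hval ▸ hyx, ?_⟩
  rw [hval, ← Finset.insert_erase hmem, hy]

lemma partner_eq {P : Finpartition (univ : Finset (Fin n))} (hP : ∀ b ∈ P.parts, b.card = 2)
    {x y : Fin n} (hy : y ∈ P.part x) (hne : y ≠ x) : partnerFun P x = y := by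
  obtain ⟨-, hpart⟩ := part_eq_pair P hP x
  rw [hpart, Finset.mem_insert, Finset.mem_singleton] at hy
  rcases hy with h | h
  · exact absurd h hne
  · exact h.symm

lemma partner_pairing (P : Finpartition (univ : Finset (Fin n))) (hP : ∀ b ∈ P.parts, b.card = 2) :
    IsPairing univ (partnerFun P) := by
  have hpart : ∀ x, P.part (partnerFun P x) = P.part x := by
    intro x
    refine P.part_eq_of_mem (P.part_mem.2 (mem_univ x)) ?_
    rw [(part_eq_pair P hP x).2]
    exact mem_insert_of_mem (mem_singleton_self _)
  refine ⟨fun x => ?_, fun x _ => ⟨(part_eq_pair P hP x).1, mem_univ _⟩, fun x hx => absurd (mem_univ x) hx⟩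
  apply partner_eq hP
  · rw [hpart x]; exact P.mem_part (mem_univ x)
  · exact fun h => (part_eq_pair P hP x).1 h.symm

/-- The pair partition associated to a fixed-point-free involution. -/
def partitionOf (f : Fin n → Fin n) (hf : IsPairing univ f) : Finpartition (univ : Finset (Fin n)) where
  parts := univ.image (fun x => ({x, f x} : Finset (Fin n)))
  supIndep := by
    rw [Finset.supIndep_iff_pairwiseDisjoint]
    have horb : ∀ z x : Fin n, z ∈ ({x, f x} : Finset (Fin n)) → ({z, f z} : Finset (Fin n)) = {x, f x} := by
      intro z x hz
      rw [Finset.mem_insert, Finset.mem_singleton] at hz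
      rcases hz with h | h
      · rw [h]
      · rw [h, hf.1 x, Finset.pair_comm]
    rintro b hb c hc hbc
    simp only [Finset.coe_image, Set.mem_image] at hb hc
    obtain ⟨x, -, rfl⟩ := hb
    obtain ⟨y, -, rfl⟩ := hc
    simp only [Function.onFun, id]
    rw [Finset.disjoint_left]
    intro z hzb hzc
    exact hbc (by rw [← horb z _ hzb, ← horb z _ hzc])
  sup_parts := by
    apply le_antisymm
    · exact Finset.sup_le fun b _ => le_top
    · intro x _
      rw [Finset.mem_sup]
      exact ⟨{x, f x}, Finset.mem_image_of_mem _ (mem_univ x), mem_insert_self x _⟩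
  bot_notMem := by
    simp only [bot_eq_empty, Finset.mem_image]
    rintro ⟨x, -, h⟩
    exact absurd (h ▸ mem_insert_self x {f x} : x ∈ (∅ : Finset (Fin n))) (notMem_empty x)

lemma partitionOf_parts_card (f : Fin n → Fin n) (hf : IsPairing univ f) :
    ∀ b ∈ (partitionOf f hf).parts, b.card = 2 := by
  intro b hb
  obtain ⟨x, -, rfl⟩ := Finset.mem_image.1 hb
  exact Finset.card_pair (fun h => (hf.2.1 x (mem_univ x)).1 h.symm)

/-- Pair partitions correspond to fixed-point-free involutions. -/
noncomputable def pairEquiv :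
    {P : Finpartition (univ : Finset (Fin n)) // ∀ b ∈ P.parts, b.card = 2} ≃
      {f : Fin n → Fin n // IsPairing univ f} where
  toFun P := ⟨partnerFun P.1, partner_pairing P.1 P.2⟩
  invFun f := ⟨partitionOf f.1 f.2, partitionOf_parts_card f.1 f.2⟩
  left_inv := by
    rintro ⟨P, hP⟩
    apply Subtype.ext
    apply Finpartition.ext
    ext b
    simp only [partitionOf, Finset.mem_image]
    constructor
    · rintro ⟨x, -, rfl⟩
      rw [← (part_eq_pair P hP x).2]
      exact P.part_mem.2 (mem_univ x)
    · intro hb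
      obtain ⟨x, hx⟩ := P.nonempty_of_mem_parts hb
      refine ⟨x, mem_univ x, ?_⟩
      rw [← (part_eq_pair P hP x).2]
      exact P.part_eq_of_mem hb hx
  right_inv := by
    rintro ⟨f, hf⟩
    apply Subtype.ext
    funext x
    have hpart : (partitionOf f hf).part x = {x, f x} := by
      apply Finpartition.part_eq_of_mem
      · exact Finset.mem_image_of_mem _ (mem_univ x)
      · exact mem_insert_self x _
    apply partner_eq (partitionOf_parts_card f hf)
    · rw [hpart]; exact mem_insert_of_mem (mem_singleton_self _)
    · exact fun h => (hf.2.1 x (mem_univ x)).1 h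

end PartnerSection

def Lset (p q : ℕ) : Finset (Fin (p + q)) := univ.filter (fun i => (i : ℕ) < p)
def Rset (p q : ℕ) : Finset (Fin (p + q)) := univ.filter (fun i => p ≤ (i : ℕ))
def crossFilter (p q : ℕ) (f : Fin (p + q) → Fin (p + q)) : Finset (Fin (p + q)) :=
  univ.filter (fun i => (i : ℕ) < p ∧ p ≤ ((f i) : ℕ))

lemma mem_Lset {p q : ℕ} {i : Fin (p + q)} : i ∈ Lset p q ↔ (i : ℕ) < p := by
  simp [Lset]

lemma mem_Rset {p q : ℕ} {i : Fin (p + q)} : i ∈ Rset p q ↔ p ≤ (i : ℕ) := by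
  simp [Rset]

lemma mem_crossFilter {p q : ℕ} {f : Fin (p + q) → Fin (p + q)} {i : Fin (p + q)} :
    i ∈ crossFilter p q f ↔ (i : ℕ) < p ∧ p ≤ ((f i) : ℕ) := by
  simp [crossFilter]

lemma Lset_card (p q : ℕ) : (Lset p q).card = p := by
  have : Lset p q = Finset.map (Fin.castAddEmb q) univ := by
    ext i
    simp only [mem_Lset, Finset.mem_map, Finset.mem_univ, true_and]
    constructor
    · intro h
      exact ⟨⟨(i : ℕ), h⟩, Fin.ext rfl⟩
    · rintro ⟨j, rfl⟩
      exact j.2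
  rw [this, Finset.card_map, Finset.card_univ, Fintype.card_fin]

lemma Rset_card (p q : ℕ) : (Rset p q).card = q := by
  have h1 : Rset p q = univ \ Lset p q := by
    ext i
    simp only [mem_Rset, Finset.mem_sdiff, Finset.mem_univ, true_and, mem_Lset]
    omega
  rw [h1, Finset.card_sdiff_of_subset (Finset.subset_univ _), Finset.card_univ, Fintype.card_fin,
    Lset_card]
  omega

lemma crossCount_eq_filter {p q : ℕ} (P : Finpartition (univ : Finset (Fin (p + q))))
    (hP : ∀ b ∈ P.parts, b.card = 2) :
    crossCount p q P = (crossFilter p q (partnerFun P)).card := by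
  rw [crossCount]
  symm
  apply Finset.card_bij (fun i _ => P.part i)
  · intro i hi
    rw [mem_crossFilter] at hi
    rw [Finset.mem_filter]
    refine ⟨P.part_mem.2 (mem_univ i), ⟨i, P.mem_part (mem_univ i), hi.1⟩, ⟨partnerFun P i, ?_, hi.2⟩⟩
    rw [(part_eq_pair P hP i).2]
    exact mem_insert_of_mem (mem_singleton_self _)
  · intro i hi j hj hij
    rw [mem_crossFilter] at hi hj
    by_contra hne
    have hj' : j ∈ P.part i := hij ▸ P.mem_part (mem_univ j)
    have := partner_eq hP hj' (fun h => hne (h ▸ rfl))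
    omega
  · intro b hb
    rw [Finset.mem_filter] at hb
    obtain ⟨hbp, ⟨i, hi, hip⟩, ⟨j, hj, hjp⟩⟩ := hb
    refine ⟨i, ?_, P.part_eq_of_mem hbp hi⟩
    rw [mem_crossFilter]
    have hne : j ≠ i := fun h => by omega
    have : partnerFun P i = j := by
      apply partner_eq hP _ hne
      rwa [P.part_eq_of_mem hbp hi]
    rw [this]
    exact ⟨hip, hjp⟩

lemma pair_min' {n : ℕ} {a b : Fin n} (h : a < b) :
    ({a, b} : Finset (Fin n)).min' ⟨a, by simp⟩ = a := by
  apply le_antisymm (Finset.min'_le _ _ (by simp))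
  apply Finset.le_min'
  intro y hy
  rcases Finset.mem_insert.1 hy with rfl | hy
  · exact le_rfl
  · rw [Finset.mem_singleton] at hy
    exact hy ▸ h.le

lemma pair_max' {n : ℕ} {a b : Fin n} (h : a < b) :
    ({a, b} : Finset (Fin n)).max' ⟨a, by simp⟩ = b := by
  apply le_antisymm
  · apply Finset.max'_le
    intro y hy
    rcases Finset.mem_insert.1 hy with rfl | hy
    · exact h.le
    · rw [Finset.mem_singleton] at hy
      exact hy ▸ le_rfl
  · exact Finset.le_max' _ _ (by simp)

lemma card_two_eq_minmax {n : ℕ} {s : Finset (Fin n)} (h : s.card = 2) :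
    ∃ a b : Fin n, a < b ∧ s = {a, b} := by
  obtain ⟨a, b, hab, rfl⟩ := Finset.card_eq_two.1 h
  rcases lt_or_gt_of_ne hab with h' | h'
  · exact ⟨a, b, h', rfl⟩
  · exact ⟨b, a, h', Finset.pair_comm a b⟩

/-- Involutions all of whose non-trivial orbits are crosses, with exactly two crosses. -/
def IsCrossInv (p q : ℕ) (c : Fin (p + q) → Fin (p + q)) : Prop :=
  Function.Involutive c ∧
    (∀ i, c i ≠ i → (((i : ℕ) < p ∧ p ≤ ((c i) : ℕ)) ∨ (p ≤ (i : ℕ) ∧ ((c i) : ℕ) < p))) ∧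
    (crossFilter p q c).card = 2

lemma crossInv_mem_crossFilter {p q : ℕ} {c : Fin (p + q) → Fin (p + q)}
    (hc : IsCrossInv p q c) {i : Fin (p + q)} (hi : (i : ℕ) < p) (hne : c i ≠ i) :
    i ∈ crossFilter p q c := by
  rw [mem_crossFilter]
  rcases hc.2.1 i hne with h | h
  · exact ⟨hi, h.2⟩
  · omega

lemma crossInv_right_mem {p q : ℕ} {c : Fin (p + q) → Fin (p + q)}
    (hc : IsCrossInv p q c) {j : Fin (p + q)} (hj : p ≤ (j : ℕ)) (hne : c j ≠ j) :
    c j ∈ crossFilter p q c ∧ j = c (c j) := by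
  have h1 : ((c j : Fin (p + q)) : ℕ) < p := by
    rcases hc.2.1 j hne with h | h
    · omega
    · exact h.2
  have h2 : c (c j) = j := hc.1 j
  refine ⟨?_, h2.symm⟩
  rw [mem_crossFilter, h2]
  exact ⟨h1, hj⟩

lemma crossInv_left_filter {p q : ℕ} {c : Fin (p + q) → Fin (p + q)}
    (hc : IsCrossInv p q c) :
    (Lset p q).filter (fun i => c i ≠ i) = crossFilter p q c := by
  ext i
  rw [Finset.mem_filter, mem_Lset, mem_crossFilter]
  constructor
  · rintro ⟨hi, hne⟩
    exact mem_crossFilter.1 (crossInv_mem_crossFilter hc hi hne)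
  · rintro ⟨hi, hci⟩
    exact ⟨hi, fun h => by rw [h] at hci; omega⟩

lemma crossInv_right_filter {p q : ℕ} {c : Fin (p + q) → Fin (p + q)}
    (hc : IsCrossInv p q c) :
    (Rset p q).filter (fun i => c i ≠ i) = (crossFilter p q c).image c := by
  ext j
  rw [Finset.mem_filter, mem_Rset, Finset.mem_image]
  constructor
  · rintro ⟨hj, hne⟩
    exact ⟨c j, (crossInv_right_mem hc hj hne).1, (hc.1 j)⟩
  · rintro ⟨i, hi, rfl⟩
    rw [mem_crossFilter] at hi
    have := hc.1 i
    constructor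
    · exact hi.2
    · rw [this]
      intro h
      rw [h] at hi
      omega

lemma crossInv_left_fix_card {p q : ℕ} {c : Fin (p + q) → Fin (p + q)}
    (hc : IsCrossInv p q c) :
    ((Lset p q).filter (fun i => c i = i)).card = p - 2 := by
  have h := Finset.card_filter_add_card_filter_not
    (s := Lset p q) (p := fun i => c i = i)
  rw [Lset_card] at h
  have h2 : ((Lset p q).filter (fun i => ¬ c i = i)).card = 2 := by
    rw [show ((Lset p q).filter (fun i => ¬ c i = i)) = (Lset p q).filter (fun i => c i ≠ i)
      from rfl, crossInv_left_filter hc, hc.2.2]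
  omega

lemma crossInv_right_fix_card {p q : ℕ} {c : Fin (p + q) → Fin (p + q)}
    (hc : IsCrossInv p q c) :
    ((Rset p q).filter (fun i => c i = i)).card = q - 2 := by
  have h := Finset.card_filter_add_card_filter_not
    (s := Rset p q) (p := fun i => c i = i)
  rw [Rset_card] at h
  have h2 : ((Rset p q).filter (fun i => ¬ c i = i)).card = 2 := by
    rw [show ((Rset p q).filter (fun i => ¬ c i = i)) = (Rset p q).filter (fun i => c i ≠ i)
      from rfl, crossInv_right_filter hc,
      Finset.card_image_of_injective _ hc.1.injective, hc.2.2]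
  omega

section BuildCrossInv

variable {p q : ℕ} {a1 a2 b1 b2 : Fin (p + q)}

/-- The cross involution determined by matched pairs `(a1,b1)`, `(a2,b2)`. -/
def buildC (a1 a2 b1 b2 : Fin (p + q)) : Fin (p + q) → Fin (p + q) := fun i =>
  if i = a1 then b1 else if i = a2 then b2 else if i = b1 then a1 else if i = b2 then a2 else i

lemma buildC_a1 : buildC a1 a2 b1 b2 a1 = b1 := by rw [buildC, if_pos rfl]

lemma buildC_a2 (h12 : a1 ≠ a2) : buildC a1 a2 b1 b2 a2 = b2 := by
  rw [buildC, if_neg (fun h => h12 h.symm), if_pos rfl]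

lemma buildC_b1 (ha1 : (a1 : ℕ) < p) (ha2 : (a2 : ℕ) < p) (hb1 : p ≤ (b1 : ℕ)) :
    buildC a1 a2 b1 b2 b1 = a1 := by
  rw [buildC, if_neg (fun h => by rw [h] at hb1; omega),
    if_neg (fun h => by rw [h] at hb1; omega), if_pos rfl]

lemma buildC_b2 (ha1 : (a1 : ℕ) < p) (ha2 : (a2 : ℕ) < p) (hb2 : p ≤ (b2 : ℕ))
    (hbne : b1 ≠ b2) : buildC a1 a2 b1 b2 b2 = a2 := by
  rw [buildC, if_neg (fun h => by rw [h] at hb2; omega),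
    if_neg (fun h => by rw [h] at hb2; omega), if_neg (fun h => hbne h.symm), if_pos rfl]

lemma buildC_other {i : Fin (p + q)} (h1 : i ≠ a1) (h2 : i ≠ a2) (h3 : i ≠ b1) (h4 : i ≠ b2) :
    buildC a1 a2 b1 b2 i = i := by
  rw [buildC, if_neg h1, if_neg h2, if_neg h3, if_neg h4]

lemma buildC_crossInv (ha1 : (a1 : ℕ) < p) (ha2 : (a2 : ℕ) < p) (h12 : a1 < a2)
    (hb1 : p ≤ (b1 : ℕ)) (hb2 : p ≤ (b2 : ℕ)) (hbne : b1 ≠ b2) : IsCrossInv p q (buildC a1 a2 b1 b2) ∧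
    crossFilter p q (buildC a1 a2 b1 b2) = {a1, a2} := by
  have e1 := buildC_a1 (q := q) (a1 := a1) (a2 := a2) (b1 := b1) (b2 := b2)
  have e2 := buildC_a2 (b1 := b1) (b2 := b2) h12.ne
  have e3 := buildC_b1 (b2 := b2) ha1 ha2 hb1
  have e4 := buildC_b2 (b1 := b1) ha1 ha2 hb2 hbne
  have hinv : Function.Involutive (buildC a1 a2 b1 b2) := by
    intro i
    by_cases h1 : i = a1
    · rw [h1, e1, e3]
    · by_cases h2 : i = a2
      · rw [h2, e2, e4]
      · by_cases h3 : i = b1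
        · rw [h3, e3, e1]
        · by_cases h4 : i = b2
          · rw [h4, e4, e2]
          · rw [buildC_other h1 h2 h3 h4, buildC_other h1 h2 h3 h4]
  have hfilter : crossFilter p q (buildC a1 a2 b1 b2) = {a1, a2} := by
    ext i
    rw [mem_crossFilter, Finset.mem_insert, Finset.mem_singleton]
    constructor
    · rintro ⟨hi, hci⟩
      by_cases h1 : i = a1
      · exact Or.inl h1
      · by_cases h2 : i = a2
        · exact Or.inr h2
        · exfalso
          by_cases h3 : i = b1
          · rw [h3] at hi; omega
          · by_cases h4 : i = b2
            · rw [h4] at hi; omega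
            · rw [buildC_other h1 h2 h3 h4] at hci; omega
    · rintro (rfl | rfl)
      · rw [e1]; exact ⟨ha1, hb1⟩
      · rw [e2]; exact ⟨ha2, hb2⟩
  refine ⟨⟨hinv, ?_, ?_⟩, hfilter⟩
  · intro i hne
    by_cases h1 : i = a1
    · subst h1; rw [e1]; exact Or.inl ⟨ha1, hb1⟩
    · by_cases h2 : i = a2
      · subst h2; rw [e2]; exact Or.inl ⟨ha2, hb2⟩
      · by_cases h3 : i = b1
        · subst h3; rw [e3]; exact Or.inr ⟨hb1, ha1⟩
        · by_cases h4 : i = b2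
          · subst h4; rw [e4]; exact Or.inr ⟨hb2, ha2⟩
          · exact absurd (buildC_other h1 h2 h3 h4) hne
  · rw [hfilter]
    exact Finset.card_pair h12.ne

end BuildCrossInv

/-- Cross involutions with two crosses correspond to an ordered pair of left points
together with an ordered pair of distinct right points. -/
noncomputable def crossInvEquiv (p q : ℕ) :
    {c : Fin (p + q) → Fin (p + q) // IsCrossInv p q c} ≃
      ({a : Fin (p + q) × Fin (p + q) // (a.1 : ℕ) < p ∧ (a.2 : ℕ) < p ∧ a.1 < a.2} ×
       {b : Fin (p + q) × Fin (p + q) // p ≤ (b.1 : ℕ) ∧ p ≤ (b.2 : ℕ) ∧ b.1 ≠ b.2}) := by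
  have hCne : ∀ c : {c : Fin (p + q) → Fin (p + q) // IsCrossInv p q c},
      (crossFilter p q c.1).Nonempty := by
    intro c
    rw [← Finset.card_pos, c.2.2.2]
    omega
  refine Equiv.mk
    (fun c => ⟨⟨((crossFilter p q c.1).min' (hCne c), (crossFilter p q c.1).max' (hCne c)), ?_⟩,
      ⟨(c.1 ((crossFilter p q c.1).min' (hCne c)), c.1 ((crossFilter p q c.1).max' (hCne c))), ?_⟩⟩)
    (fun z => ⟨buildC z.1.1.1 z.1.1.2 z.2.1.1 z.2.1.2,
      (buildC_crossInv z.1.2.1 z.1.2.2.1 z.1.2.2.2 z.2.2.1 z.2.2.2.1 z.2.2.2.2).1⟩)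
    ?_ ?_
  · have hmin := Finset.min'_mem _ (hCne c)
    have hmax := Finset.max'_mem _ (hCne c)
    rw [mem_crossFilter] at hmin hmax
    exact ⟨hmin.1, hmax.1, Finset.min'_lt_max'_of_card _ (by rw [c.2.2.2]; omega)⟩
  · have hmin := Finset.min'_mem _ (hCne c)
    have hmax := Finset.max'_mem _ (hCne c)
    rw [mem_crossFilter] at hmin hmax
    refine ⟨hmin.2, hmax.2, ?_⟩
    intro h
    exact (Finset.min'_lt_max'_of_card _ (by rw [c.2.2.2]; omega)).ne
      (c.2.1.injective h)
  · -- left inverse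
    rintro ⟨c, hc⟩
    apply Subtype.ext
    dsimp only
    have hCne' : (crossFilter p q c).Nonempty := by rw [← Finset.card_pos, hc.2.2]; omega
    set a1 := (crossFilter p q c).min' hCne' with ha1def
    set a2 := (crossFilter p q c).max' hCne' with ha2def
    have hmin := Finset.min'_mem _ hCne'
    have hmax := Finset.max'_mem _ hCne'
    have h12 : a1 < a2 := Finset.min'_lt_max'_of_card _ (by rw [hc.2.2]; omega)
    have hCeq : crossFilter p q c = {a1, a2} := by
      symm
      apply Finset.eq_of_subset_of_card_le
      · intro x hx
        rcases Finset.mem_insert.1 hx with rfl | hx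
        · exact hmin
        · rw [Finset.mem_singleton] at hx; exact hx ▸ hmax
      · rw [hc.2.2, Finset.card_pair h12.ne]
    rw [mem_crossFilter] at hmin hmax
    funext i
    by_cases h1 : i = a1
    · rw [h1, buildC_a1]
    · by_cases h2 : i = a2
      · rw [h2, buildC_a2 h12.ne]
      · by_cases h3 : i = c a1
        · rw [h3, buildC_b1 hmin.1 hmax.1 hmin.2, hc.1 a1]
        · by_cases h4 : i = c a2
          · rw [h4, buildC_b2 hmin.1 hmax.1 hmax.2
              (fun h => h12.ne (hc.1.injective h)), hc.1 a2]
          · rw [buildC_other h1 h2 h3 h4]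
            by_contra hne
            have hne' : c i ≠ i := fun h => hne h.symm
            rcases Nat.lt_or_ge (i : ℕ) p with hip | hip
            · have := crossInv_mem_crossFilter hc hip hne'
              rw [hCeq, Finset.mem_insert, Finset.mem_singleton] at this
              tauto
            · obtain ⟨hmem, heq⟩ := crossInv_right_mem hc hip hne'
              rw [hCeq, Finset.mem_insert, Finset.mem_singleton] at hmem
              rcases hmem with h | h
              · exact h3 (by rw [heq, h])
              · exact h4 (by rw [heq, h])
  · -- right inverse
    rintro ⟨⟨⟨a1, a2⟩, ha1, ha2, h12⟩, ⟨⟨b1, b2⟩, hb1, hb2, hbne⟩⟩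
    obtain ⟨hK, hF⟩ := buildC_crossInv ha1 ha2 h12 hb1 hb2 hbne
    dsimp only at hK hF ⊢
    have hmin : ∀ H, (crossFilter p q (buildC a1 a2 b1 b2)).min' H = a1 := by
      intro H
      rw [show (crossFilter p q (buildC a1 a2 b1 b2)).min' H
          = ({a1, a2} : Finset (Fin (p + q))).min' (by rw [← hF]; exact H) from by congr 1]
      exact pair_min' h12
    have hmax : ∀ H, (crossFilter p q (buildC a1 a2 b1 b2)).max' H = a2 := by
      intro H
      rw [show (crossFilter p q (buildC a1 a2 b1 b2)).max' H
          = ({a1, a2} : Finset (Fin (p + q))).max' (by rw [← hF]; exact H) from by congr 1]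
      exact pair_max' h12
    refine Prod.ext (Subtype.ext ?_) (Subtype.ext ?_) <;> dsimp only
    · rw [hmin, hmax]
    · rw [hmin, hmax, buildC_a1, buildC_a2 h12.ne]

section Decomp

variable {p q : ℕ}

def cPart (p q : ℕ) (f : Fin (p + q) → Fin (p + q)) : Fin (p + q) → Fin (p + q) := fun i =>
  if ((i : ℕ) < p ∧ p ≤ ((f i) : ℕ)) ∨ (p ≤ (i : ℕ) ∧ ((f i) : ℕ) < p) then f i else i

def gPart (p q : ℕ) (f : Fin (p + q) → Fin (p + q)) : Fin (p + q) → Fin (p + q) := fun i =>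
  if (i : ℕ) < p ∧ ((f i) : ℕ) < p then f i else i

def hPart (p q : ℕ) (f : Fin (p + q) → Fin (p + q)) : Fin (p + q) → Fin (p + q) := fun i =>
  if p ≤ (i : ℕ) ∧ p ≤ ((f i) : ℕ) then f i else i

def Lfix (p q : ℕ) (c : Fin (p + q) → Fin (p + q)) : Finset (Fin (p + q)) :=
  (Lset p q).filter (fun i => c i = i)

def Rfix (p q : ℕ) (c : Fin (p + q) → Fin (p + q)) : Finset (Fin (p + q)) :=
  (Rset p q).filter (fun i => c i = i)

lemma mem_Lfix {c : Fin (p + q) → Fin (p + q)} {i : Fin (p + q)} :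
    i ∈ Lfix p q c ↔ (i : ℕ) < p ∧ c i = i := by
  simp [Lfix, mem_Lset, Finset.mem_filter]

lemma mem_Rfix {c : Fin (p + q) → Fin (p + q)} {i : Fin (p + q)} :
    i ∈ Rfix p q c ↔ p ≤ (i : ℕ) ∧ c i = i := by
  simp [Rfix, mem_Rset, Finset.mem_filter]

lemma cPart_crossFilter {f : Fin (p + q) → Fin (p + q)} :
    crossFilter p q (cPart p q f) = crossFilter p q f := by
  ext i
  rw [mem_crossFilter, mem_crossFilter, cPart]
  by_cases hcond : ((i : ℕ) < p ∧ p ≤ ((f i) : ℕ)) ∨ (p ≤ (i : ℕ) ∧ ((f i) : ℕ) < p)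
  · rw [if_pos hcond]
  · rw [if_neg hcond]
    push_neg at hcond
    constructor
    · rintro ⟨h1, h2⟩; omega
    · rintro ⟨h1, h2⟩
      have := hcond.1 h1
      omega

lemma cPart_pos {f : Fin (p + q) → Fin (p + q)} {i : Fin (p + q)}
    (h : ((i : ℕ) < p ∧ p ≤ ((f i) : ℕ)) ∨ (p ≤ (i : ℕ) ∧ ((f i) : ℕ) < p)) :
    cPart p q f i = f i := by rw [cPart, if_pos h]

lemma cPart_neg {f : Fin (p + q) → Fin (p + q)} {i : Fin (p + q)}
    (h : ¬(((i : ℕ) < p ∧ p ≤ ((f i) : ℕ)) ∨ (p ≤ (i : ℕ) ∧ ((f i) : ℕ) < p))) :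
    cPart p q f i = i := by rw [cPart, if_neg h]

lemma cPart_crossInv {f : Fin (p + q) → Fin (p + q)} (hinv : Function.Involutive f)
    (hcard : (crossFilter p q f).card = 2) : IsCrossInv p q (cPart p q f) := by
  have hsymm : ∀ i : Fin (p + q),
      (((i : ℕ) < p ∧ p ≤ ((f i) : ℕ)) ∨ (p ≤ (i : ℕ) ∧ ((f i) : ℕ) < p)) →
      ((((f i) : ℕ) < p ∧ p ≤ ((f (f i)) : ℕ)) ∨ (p ≤ ((f i) : ℕ) ∧ ((f (f i)) : ℕ) < p)) := by
    intro i h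
    rw [hinv i]
    tauto
  refine ⟨?_, ?_, by rw [cPart_crossFilter]; exact hcard⟩
  · intro i
    by_cases hcond : ((i : ℕ) < p ∧ p ≤ ((f i) : ℕ)) ∨ (p ≤ (i : ℕ) ∧ ((f i) : ℕ) < p)
    · rw [cPart_pos hcond, cPart_pos (hsymm i hcond), hinv i]
    · rw [cPart_neg hcond, cPart_neg hcond]
  · intro i hne
    by_cases hcond : ((i : ℕ) < p ∧ p ≤ ((f i) : ℕ)) ∨ (p ≤ (i : ℕ) ∧ ((f i) : ℕ) < p)
    · rw [cPart_pos hcond]; exact hcond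
    · exact absurd (cPart_neg hcond) hne

lemma mem_Lfix_cPart {f : Fin (p + q) → Fin (p + q)} (hf : IsPairing univ f) {i : Fin (p + q)} :
    i ∈ Lfix p q (cPart p q f) ↔ (i : ℕ) < p ∧ ((f i) : ℕ) < p := by
  rw [mem_Lfix, cPart]
  constructor
  · rintro ⟨hi, hfix⟩
    refine ⟨hi, ?_⟩
    by_cases hcond : ((i : ℕ) < p ∧ p ≤ ((f i) : ℕ)) ∨ (p ≤ (i : ℕ) ∧ ((f i) : ℕ) < p)
    · rw [if_pos hcond] at hfix
      exact absurd hfix (hf.2.1 i (mem_univ i)).1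
    · push_neg at hcond
      have := hcond.1 hi
      omega
  · rintro ⟨hi, hfi⟩
    exact ⟨hi, by rw [if_neg (by omega)]⟩

lemma mem_Rfix_cPart {f : Fin (p + q) → Fin (p + q)} (hf : IsPairing univ f) {i : Fin (p + q)} :
    i ∈ Rfix p q (cPart p q f) ↔ p ≤ (i : ℕ) ∧ p ≤ ((f i) : ℕ) := by
  rw [mem_Rfix, cPart]
  constructor
  · rintro ⟨hi, hfix⟩
    refine ⟨hi, ?_⟩
    by_cases hcond : ((i : ℕ) < p ∧ p ≤ ((f i) : ℕ)) ∨ (p ≤ (i : ℕ) ∧ ((f i) : ℕ) < p)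
    · rw [if_pos hcond] at hfix
      exact absurd hfix (hf.2.1 i (mem_univ i)).1
    · push_neg at hcond
      omega
  · rintro ⟨hi, hfi⟩
    exact ⟨hi, by rw [if_neg (by omega)]⟩

lemma gPart_pairing {f : Fin (p + q) → Fin (p + q)} (hf : IsPairing univ f) :
    IsPairing (Lfix p q (cPart p q f)) (gPart p q f) := by
  refine ⟨?_, ?_, ?_⟩
  · have gpos : ∀ i : Fin (p + q), (i : ℕ) < p ∧ ((f i) : ℕ) < p → gPart p q f i = f i :=
      fun i h => by rw [gPart, if_pos h]
    have gneg : ∀ i : Fin (p + q), ¬((i : ℕ) < p ∧ ((f i) : ℕ) < p) → gPart p q f i = i :=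
      fun i h => by rw [gPart, if_neg h]
    intro i
    by_cases hcond : (i : ℕ) < p ∧ ((f i) : ℕ) < p
    · rw [gpos i hcond, gpos (f i) (by rw [hf.1 i]; exact ⟨hcond.2, hcond.1⟩), hf.1 i]
    · rw [gneg i hcond, gneg i hcond]
  · intro i hi
    rw [mem_Lfix_cPart hf] at hi
    rw [gPart, if_pos hi]
    refine ⟨(hf.2.1 i (mem_univ i)).1, ?_⟩
    rw [mem_Lfix_cPart hf, hf.1 i]
    exact ⟨hi.2, hi.1⟩
  · intro i hi
    rw [mem_Lfix_cPart hf] at hi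
    rw [gPart, if_neg hi]

lemma hPart_pairing {f : Fin (p + q) → Fin (p + q)} (hf : IsPairing univ f) :
    IsPairing (Rfix p q (cPart p q f)) (hPart p q f) := by
  refine ⟨?_, ?_, ?_⟩
  · have gpos : ∀ i : Fin (p + q), p ≤ (i : ℕ) ∧ p ≤ ((f i) : ℕ) → hPart p q f i = f i :=
      fun i h => by rw [hPart, if_pos h]
    have gneg : ∀ i : Fin (p + q), ¬(p ≤ (i : ℕ) ∧ p ≤ ((f i) : ℕ)) → hPart p q f i = i :=
      fun i h => by rw [hPart, if_neg h]
    intro i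
    by_cases hcond : p ≤ (i : ℕ) ∧ p ≤ ((f i) : ℕ)
    · rw [gpos i hcond, gpos (f i) (by rw [hf.1 i]; exact ⟨hcond.2, hcond.1⟩), hf.1 i]
    · rw [gneg i hcond, gneg i hcond]
  · intro i hi
    rw [mem_Rfix_cPart hf] at hi
    rw [hPart, if_pos hi]
    refine ⟨(hf.2.1 i (mem_univ i)).1, ?_⟩
    rw [mem_Rfix_cPart hf, hf.1 i]
    exact ⟨hi.2, hi.1⟩
  · intro i hi
    rw [mem_Rfix_cPart hf] at hi
    rw [hPart, if_neg hi]

def recomb (p q : ℕ) (c g h : Fin (p + q) → Fin (p + q)) : Fin (p + q) → Fin (p + q) :=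
  fun i => if c i ≠ i then c i else if (i : ℕ) < p then g i else h i

lemma recomb_pairing {c g h : Fin (p + q) → Fin (p + q)} (hc : IsCrossInv p q c)
    (hg : IsPairing (Lfix p q c) g) (hh : IsPairing (Rfix p q c) h) :
    IsPairing univ (recomb p q c g h) ∧
      crossFilter p q (recomb p q c g h) = crossFilter p q c := by
  have hval : ∀ i, (c i ≠ i → recomb p q c g h i = c i) ∧
      (c i = i → (i : ℕ) < p → recomb p q c g h i = g i) ∧
      (c i = i → p ≤ (i : ℕ) → recomb p q c g h i = h i) := by
    intro i
    refine ⟨fun hne => by rw [recomb, if_pos hne], fun hfix hip => ?_, fun hfix hip => ?_⟩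
    · rw [recomb, if_neg (by simpa using hfix), if_pos hip]
    · rw [recomb, if_neg (by simpa using hfix), if_neg (by omega)]
  have hginv : ∀ i, c i = i → (i : ℕ) < p → g i ∈ Lfix p q c ∧ g i ≠ i := by
    intro i hfix hip
    have hi : i ∈ Lfix p q c := mem_Lfix.2 ⟨hip, hfix⟩
    exact ⟨(hg.2.1 i hi).2, (hg.2.1 i hi).1⟩
  have hhinv : ∀ i, c i = i → p ≤ (i : ℕ) → h i ∈ Rfix p q c ∧ h i ≠ i := by
    intro i hfix hip
    have hi : i ∈ Rfix p q c := mem_Rfix.2 ⟨hip, hfix⟩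
    exact ⟨(hh.2.1 i hi).2, (hh.2.1 i hi).1⟩
  constructor
  · refine ⟨?_, fun i _ => ⟨?_, mem_univ _⟩, fun i hi => absurd (mem_univ i) hi⟩
    · intro i
      by_cases hne : c i = i
      · rcases Nat.lt_or_ge (i : ℕ) p with hip | hip
        · rw [(hval i).2.1 hne hip]
          obtain ⟨hmem, -⟩ := hginv i hne hip
          rw [mem_Lfix] at hmem
          rw [(hval (g i)).2.1 hmem.2 hmem.1]
          exact hg.1 i
        · rw [(hval i).2.2 hne hip]
          obtain ⟨hmem, -⟩ := hhinv i hne hip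
          rw [mem_Rfix] at hmem
          rw [(hval (h i)).2.2 hmem.2 hmem.1]
          exact hh.1 i
      · rw [(hval i).1 hne]
        have h2 : c (c i) = i := hc.1 i
        have h3 : c (c i) ≠ c i := fun hcon => hne (hcon.symm.trans h2)
        rw [(hval (c i)).1 h3, h2]
    · by_cases hne : c i = i
      · rcases Nat.lt_or_ge (i : ℕ) p with hip | hip
        · rw [(hval i).2.1 hne hip]; exact (hginv i hne hip).2
        · rw [(hval i).2.2 hne hip]; exact (hhinv i hne hip).2
      · rw [(hval i).1 hne]; exact hne
  · ext i
    rw [mem_crossFilter, mem_crossFilter]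
    by_cases hne : c i = i
    · rcases Nat.lt_or_ge (i : ℕ) p with hip | hip
      · rw [(hval i).2.1 hne hip]
        obtain ⟨hmem, -⟩ := hginv i hne hip
        rw [mem_Lfix] at hmem
        constructor
        · rintro ⟨-, hcon⟩; omega
        · rintro ⟨-, hcon⟩; rw [hne] at hcon; omega
      · constructor
        · rintro ⟨hcon, -⟩; omega
        · rintro ⟨hcon, -⟩; omega
    · rw [(hval i).1 hne]

end Decomp

section DecompEquiv

variable {p q : ℕ}

lemma recomb_move {c g h : Fin (p + q) → Fin (p + q)} {i : Fin (p + q)} (hne : c i ≠ i) :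
    recomb p q c g h i = c i := by rw [recomb, if_pos hne]

lemma recomb_fixL {c g h : Fin (p + q) → Fin (p + q)} {i : Fin (p + q)} (hfix : c i = i)
    (hip : (i : ℕ) < p) : recomb p q c g h i = g i := by
  rw [recomb, if_neg (by simpa using hfix), if_pos hip]

lemma recomb_fixR {c g h : Fin (p + q) → Fin (p + q)} {i : Fin (p + q)} (hfix : c i = i)
    (hip : ¬ (i : ℕ) < p) : recomb p q c g h i = h i := by
  rw [recomb, if_neg (by simpa using hfix), if_neg hip]

lemma recomb_decomp {f : Fin (p + q) → Fin (p + q)} (hf : IsPairing univ f) :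
    recomb p q (cPart p q f) (gPart p q f) (hPart p q f) = f := by
  funext i
  by_cases hcond : ((i : ℕ) < p ∧ p ≤ ((f i) : ℕ)) ∨ (p ≤ (i : ℕ) ∧ ((f i) : ℕ) < p)
  · have h1 : cPart p q f i = f i := cPart_pos hcond
    have h2 : cPart p q f i ≠ i := by rw [h1]; exact (hf.2.1 i (mem_univ i)).1
    rw [recomb_move h2, h1]
  · have h1 : cPart p q f i = i := cPart_neg hcond
    push_neg at hcond
    rcases Nat.lt_or_ge (i : ℕ) p with hip | hip
    · rw [recomb_fixL h1 hip, gPart, if_pos ⟨hip, by have := hcond.1 hip; omega⟩]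
    · rw [recomb_fixR h1 (by omega), hPart, if_pos ⟨hip, by have := hcond.2 hip; omega⟩]

lemma cPart_recomb {c g h : Fin (p + q) → Fin (p + q)} (hc : IsCrossInv p q c)
    (hg : IsPairing (Lfix p q c) g) (hh : IsPairing (Rfix p q c) h) :
    cPart p q (recomb p q c g h) = c := by
  funext i
  by_cases hne : c i = i
  · rcases Nat.lt_or_ge (i : ℕ) p with hip | hip
    · have h1 : recomb p q c g h i = g i := recomb_fixL hne hip
      have hgi : g i ∈ Lfix p q c := (hg.2.1 i (mem_Lfix.2 ⟨hip, hne⟩)).2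
      rw [mem_Lfix] at hgi
      rw [cPart_neg (by rw [h1]; omega), hne]
    · have h1 : recomb p q c g h i = h i := recomb_fixR hne (by omega)
      have hhi : h i ∈ Rfix p q c := (hh.2.1 i (mem_Rfix.2 ⟨hip, hne⟩)).2
      rw [mem_Rfix] at hhi
      rw [cPart_neg (by rw [h1]; omega), hne]
  · have h1 : recomb p q c g h i = c i := recomb_move hne
    rw [cPart_pos (by rw [h1]; exact hc.2.1 i hne), h1]

lemma gPart_recomb {c g h : Fin (p + q) → Fin (p + q)} (hc : IsCrossInv p q c)
    (hg : IsPairing (Lfix p q c) g) (hh : IsPairing (Rfix p q c) h) :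
    gPart p q (recomb p q c g h) = g := by
  funext i
  rcases Nat.lt_or_ge (i : ℕ) p with hip | hip
  · by_cases hne : c i = i
    · have h1 : recomb p q c g h i = g i := recomb_fixL hne hip
      have hgi : g i ∈ Lfix p q c := (hg.2.1 i (mem_Lfix.2 ⟨hip, hne⟩)).2
      rw [mem_Lfix] at hgi
      rw [gPart, if_pos (by rw [h1]; exact ⟨hip, hgi.1⟩), h1]
    · have h1 : recomb p q c g h i = c i := recomb_move hne
      have hcross : p ≤ ((c i) : ℕ) := by
        rcases hc.2.1 i hne with hx | hx
        · exact hx.2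
        · omega
      rw [gPart, if_neg (by rw [h1]; omega)]
      exact (hg.2.2 i (by rw [mem_Lfix]; tauto)).symm
  · rw [gPart, if_neg (by omega)]
    exact (hg.2.2 i (by rw [mem_Lfix]; omega)).symm

lemma hPart_recomb {c g h : Fin (p + q) → Fin (p + q)} (hc : IsCrossInv p q c)
    (hg : IsPairing (Lfix p q c) g) (hh : IsPairing (Rfix p q c) h) :
    hPart p q (recomb p q c g h) = h := by
  funext i
  rcases Nat.lt_or_ge (i : ℕ) p with hip | hip
  · rw [hPart, if_neg (by omega)]
    exact (hh.2.2 i (by rw [mem_Rfix]; omega)).symm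
  · by_cases hne : c i = i
    · have h1 : recomb p q c g h i = h i := recomb_fixR hne (by omega)
      have hhi : h i ∈ Rfix p q c := (hh.2.1 i (mem_Rfix.2 ⟨hip, hne⟩)).2
      rw [mem_Rfix] at hhi
      rw [hPart, if_pos (by rw [h1]; exact ⟨hip, hhi.1⟩), h1]
    · have h1 : recomb p q c g h i = c i := recomb_move hne
      have hcross : ((c i) : ℕ) < p := by
        rcases hc.2.1 i hne with hx | hx
        · omega
        · exact hx.2
      rw [hPart, if_neg (by rw [h1]; omega)]
      exact (hh.2.2 i (by rw [mem_Rfix]; tauto)).symm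

/-- Decomposition of a pairing with two crosses into its cross part and the two
intra-side pairings. -/
noncomputable def decompEquiv (p q : ℕ) :
    {f : Fin (p + q) → Fin (p + q) // IsPairing univ f ∧ (crossFilter p q f).card = 2} ≃
      Σ c : {c : Fin (p + q) → Fin (p + q) // IsCrossInv p q c},
        {gh : (Fin (p + q) → Fin (p + q)) × (Fin (p + q) → Fin (p + q)) //
          IsPairing (Lfix p q c.1) gh.1 ∧ IsPairing (Rfix p q c.1) gh.2} where
  toFun f := ⟨⟨cPart p q f.1, cPart_crossInv f.2.1.1 f.2.2⟩,
    ⟨(gPart p q f.1, hPart p q f.1), gPart_pairing f.2.1, hPart_pairing f.2.1⟩⟩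
  invFun z := ⟨recomb p q z.1.1 z.2.1.1 z.2.1.2,
    (recomb_pairing z.1.2 z.2.2.1 z.2.2.2).1,
    by rw [(recomb_pairing z.1.2 z.2.2.1 z.2.2.2).2]; exact z.1.2.2.2⟩
  left_inv f := Subtype.ext (recomb_decomp f.2.1)
  right_inv z := by
    obtain ⟨⟨c, hc⟩, ⟨⟨g, h⟩, hg, hh⟩⟩ := z
    dsimp only
    apply Sigma.subtype_ext
    · exact Subtype.ext (cPart_recomb hc hg hh)
    · dsimp only
      rw [gPart_recomb hc hg hh, hPart_recomb hc hg hh]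

end DecompEquiv

section Counts

variable (p q : ℕ)

noncomputable def leftPairsEquiv :
    {a : Fin (p + q) × Fin (p + q) // (a.1 : ℕ) < p ∧ (a.2 : ℕ) < p ∧ a.1 < a.2} ≃
      {S : Finset (Fin (p + q)) // S ∈ (Lset p q).powersetCard 2} where
  toFun a := ⟨{a.1.1, a.1.2}, Finset.mem_powersetCard.2
    ⟨by intro x hx
        rcases Finset.mem_insert.1 hx with rfl | hx
        · exact mem_Lset.2 a.2.1
        · rw [Finset.mem_singleton] at hx
          exact hx ▸ mem_Lset.2 a.2.2.1,
      Finset.card_pair a.2.2.2.ne⟩⟩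
  invFun S := by
    have hS := Finset.mem_powersetCard.1 S.2
    have hne : S.1.Nonempty := by rw [← Finset.card_pos, hS.2]; omega
    exact ⟨(S.1.min' hne, S.1.max' hne),
      mem_Lset.1 (hS.1 (Finset.min'_mem _ hne)),
      mem_Lset.1 (hS.1 (Finset.max'_mem _ hne)),
      Finset.min'_lt_max'_of_card _ (by rw [hS.2]; omega)⟩
  left_inv := by
    rintro ⟨⟨a1, a2⟩, h1, h2, h12⟩
    apply Subtype.ext
    dsimp only
    rw [show ({a1, a2} : Finset (Fin (p + q))).min' _ = a1 from pair_min' h12,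
      show ({a1, a2} : Finset (Fin (p + q))).max' _ = a2 from pair_max' h12]
  right_inv := by
    rintro ⟨S, hS⟩
    apply Subtype.ext
    dsimp only
    obtain ⟨a, b, hab, rfl⟩ := card_two_eq_minmax (Finset.mem_powersetCard.1 hS).2
    rw [show ({a, b} : Finset (Fin (p + q))).min' _ = a from pair_min' hab,
      show ({a, b} : Finset (Fin (p + q))).max' _ = b from pair_max' hab]

lemma leftPairs_card :
    Nat.card {a : Fin (p + q) × Fin (p + q) // (a.1 : ℕ) < p ∧ (a.2 : ℕ) < p ∧ a.1 < a.2} =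
      p.choose 2 := by
  rw [Nat.card_congr (leftPairsEquiv p q), Nat.card_eq_fintype_card, Fintype.card_coe,
    Finset.card_powersetCard, Lset_card]

lemma rightPairs_card :
    Nat.card {b : Fin (p + q) × Fin (p + q) // p ≤ (b.1 : ℕ) ∧ p ≤ (b.2 : ℕ) ∧ b.1 ≠ b.2} =
      q * q - q := by
  have e : {b : Fin (p + q) × Fin (p + q) // p ≤ (b.1 : ℕ) ∧ p ≤ (b.2 : ℕ) ∧ b.1 ≠ b.2} ≃
      {b : Fin (p + q) × Fin (p + q) // b ∈ (Rset p q).offDiag} :=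
    Equiv.subtypeEquivRight (fun b => by rw [Finset.mem_offDiag, mem_Rset, mem_Rset])
  rw [Nat.card_congr e, Nat.card_eq_fintype_card, Fintype.card_coe, Finset.offDiag_card,
    Rset_card]

lemma crossInv_card :
    Nat.card {c : Fin (p + q) → Fin (p + q) // IsCrossInv p q c} =
      p.choose 2 * (q * q - q) := by
  rw [Nat.card_congr (crossInvEquiv p q), Nat.card_prod, leftPairs_card, rightPairs_card]

end Counts

lemma two_mul_choose_two (n : ℕ) : 2 * n.choose 2 = n * (n - 1) := by
  rw [Nat.choose_two_right, Nat.mul_div_cancel']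
  rcases Nat.even_or_odd n with h | h
  · exact Dvd.dvd.mul_right (even_iff_two_dvd.1 h) _
  · apply Dvd.dvd.mul_left
    rcases h with ⟨k, hk⟩
    exact ⟨k, by omega⟩

lemma doubleFactorial_step {m : ℕ} (h : 2 ≤ m) :
    Nat.doubleFactorial (m - 1) = (m - 1) * Nat.doubleFactorial (m - 3) := by
  rcases Nat.lt_or_ge m 3 with h3 | h3
  · interval_cases m
    simp [Nat.doubleFactorial]
  · rw [show m - 1 = (m - 3) + 2 by omega, Nat.doubleFactorial]

lemma main_count (p q : ℕ) (hp : Even p) (hq : Even q) (hp2 : 2 ≤ p) (hq2 : 2 ≤ q) :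
    Nat.card {P : Finpartition (Finset.univ : Finset (Fin (p + q))) //
        (∀ b ∈ P.parts, b.card = 2) ∧ crossCount p q P = 2} =
      p.choose 2 * (q * q - q) * (Nat.doubleFactorial (p - 3) * Nat.doubleFactorial (q - 3)) := by
  classical
  have eA := (Equiv.subtypeSubtypeEquivSubtypeInter
    (fun P : Finpartition (Finset.univ : Finset (Fin (p + q))) => ∀ b ∈ P.parts, b.card = 2)
    (fun P => crossCount p q P = 2)).symm
  have eB : {x : {P : Finpartition (Finset.univ : Finset (Fin (p + q))) //
        ∀ b ∈ P.parts, b.card = 2} // crossCount p q x.1 = 2} ≃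
      {y : {f : Fin (p + q) → Fin (p + q) // IsPairing univ f} //
        (crossFilter p q y.1).card = 2} := by
    refine pairEquiv.subtypeEquiv (fun x => ?_)
    rw [crossCount_eq_filter x.1 x.2]
    rfl
  have eC := Equiv.subtypeSubtypeEquivSubtypeInter
    (fun f : Fin (p + q) → Fin (p + q) => IsPairing univ f)
    (fun f => (crossFilter p q f).card = 2)
  rw [Nat.card_congr (eA.trans (eB.trans eC)), Nat.card_congr (decompEquiv p q)]
  haveI : Fintype {c : Fin (p + q) → Fin (p + q) // IsCrossInv p q c} := Fintype.ofFinite _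
  rw [nat_card_sigma]
  obtain ⟨kp, hkp⟩ := hp
  obtain ⟨kq, hkq⟩ := hq
  have step : ∀ c : {c : Fin (p + q) → Fin (p + q) // IsCrossInv p q c},
      Nat.card {gh : (Fin (p + q) → Fin (p + q)) × (Fin (p + q) → Fin (p + q)) //
          IsPairing (Lfix p q c.1) gh.1 ∧ IsPairing (Rfix p q c.1) gh.2} =
        Nat.doubleFactorial (p - 3) * Nat.doubleFactorial (q - 3) := by
    intro c
    rw [Nat.card_congr (Equiv.subtypeProdEquivProd), Nat.card_prod]
    have hL : (Lfix p q c.1).card = p - 2 := crossInv_left_fix_card c.2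
    have hR : (Rfix p q c.1).card = q - 2 := crossInv_right_fix_card c.2
    rw [card_pairings_s5 (p - 2) _ hL ⟨kp - 1, by omega⟩,
      card_pairings_s5 (q - 2) _ hR ⟨kq - 1, by omega⟩,
      show p - 2 - 1 = p - 3 by omega, show q - 2 - 1 = q - 3 by omega]
  rw [Finset.sum_congr rfl (fun c _ => step c), Finset.sum_const, Finset.card_univ,
    smul_eq_mul, ← Nat.card_eq_fintype_card, crossInv_card]

/-- For even `p, q ≥ 2`, the number of pair partitions of `{1,...,p+q}` with exactly two
crosses equals `2 C(p,2) C(q,2) (p-3)!! (q-3)!! = (pq/2)(p-1)!!(q-1)!!`. -/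
theorem count_pair_partitions_two_crosses (p q : ℕ)
    (hp : Even p) (hq : Even q) (hp2 : 2 ≤ p) (hq2 : 2 ≤ q) :
    Nat.card {P : Finpartition (Finset.univ : Finset (Fin (p + q))) //
        (∀ b ∈ P.parts, b.card = 2) ∧ crossCount p q P = 2} =
      2 * p.choose 2 * q.choose 2 * Nat.doubleFactorial (p - 3) * Nat.doubleFactorial (q - 3) ∧
    2 * Nat.card {P : Finpartition (Finset.univ : Finset (Fin (p + q))) //
        (∀ b ∈ P.parts, b.card = 2) ∧ crossCount p q P = 2} =
      p * q * Nat.doubleFactorial (p - 1) * Nat.doubleFactorial (q - 1) := by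
  have hmc := main_count p q hp hq hp2 hq2
  have hqq : q * q - q = q * (q - 1) := by
    rcases q with _ | n
    · rfl
    · rw [Nat.succ_sub_one]
      apply Nat.sub_eq_of_eq_add
      ring
  have h2q : q * q - q = 2 * q.choose 2 := by rw [hqq, two_mul_choose_two]
  constructor
  · rw [hmc, h2q]
    ring
  · rw [hmc, hqq, doubleFactorial_step hp2, doubleFactorial_step hq2]
    have hpp : 2 * p.choose 2 = p * (p - 1) := two_mul_choose_two p
    calc 2 * (p.choose 2 * (q * (q - 1)) *
          (Nat.doubleFactorial (p - 3) * Nat.doubleFactorial (q - 3)))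
        = (2 * p.choose 2) * (q * (q - 1)) *
          (Nat.doubleFactorial (p - 3) * Nat.doubleFactorial (q - 3)) := by ring
      _ = p * q * ((p - 1) * Nat.doubleFactorial (p - 3)) *
          ((q - 1) * Nat.doubleFactorial (q - 3)) := by rw [hpp]; ring
end

section
/- Fix n ≥ 2 and p ≥ 2, and consider the set B of p-tuples (j_1,...,j_p) with each j_i ∈ {±1,...,±n} and j_1 + ··· + j_p = 0 such that each element of the multiset {|j_1|,...,|j_p|} appears with multiplicity at least 2. Then |B| ≤ C(p) · n^{⌊p/2⌋} for a constant C(p) depending only on p. In particular if p is odd, |B| = O(n^{(p-1)/2}). -/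
/-!
Recording the signs separately, a tuple in `B` is determined by its sign pattern (at most `2^p`
choices) and its tuple of absolute values. Since every absolute value occurs at least twice,
that tuple takes at most `⌊p/2⌋` distinct values in `{1, …, n}`, so it factors as `v ∘ c` with
`c : Fin p → Fin ⌊p/2⌋` and `v : Fin ⌊p/2⌋ → {1, …, n}`: at most `p^p n^⌊p/2⌋` choices.
-/

open Finset

theorem card_image_le_half_of_forall_exists_ne_eq {ι β : Type*} [Fintype ι] [DecidableEq β]
    (f : ι → β) (hf : ∀ i, ∃ i', i' ≠ i ∧ f i = f i') :
    #(univ.image f) ≤ Fintype.card ι / 2 := by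
  classical
  have hfiber : ∀ b ∈ univ.image f, 2 ≤ #{i ∈ univ | f i = b} := by
    intro b hb
    obtain ⟨i, -, rfl⟩ := mem_image.mp hb
    obtain ⟨i', hi', hii'⟩ := hf i
    calc 2 = #{i, i'} := (card_pair hi'.symm).symm
      _ ≤ #{j ∈ univ | f j = f i} :=
        card_le_card <| by simp [insert_subset_iff, hii']
  have := mul_card_image_le_card univ 2 hfiber
  rw [card_univ] at this
  omega

theorem exists_fin_factorization_of_card_image_le {ι β : Type*} [Fintype ι] [Nonempty ι]
    [DecidableEq β] {s : Finset β} {k : ℕ} {f : ι → β} (hf : ∀ i, f i ∈ s)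
    (hk : #(univ.image f) ≤ k) :
    ∃ (v : Fin k → s) (c : ι → Fin k), ∀ i, (v (c i) : β) = f i := by
  set T := univ.image f
  have hTs : ∀ x ∈ T, x ∈ s := by
    intro x hx
    obtain ⟨i, -, rfl⟩ := mem_image.mp hx
    exact hf i
  let e : T ↪ Fin k := T.equivFin.toEmbedding.trans (Fin.castLEEmb hk)
  let i₀ : ι := Classical.arbitrary ι
  refine ⟨Function.extend e (fun x => ⟨x, hTs x x.2⟩) (fun _ => ⟨f i₀, hf i₀⟩),
    fun i => e ⟨f i, mem_image_of_mem f (mem_univ i)⟩, fun i => ?_⟩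
  rw [e.injective.extend_apply]

theorem card_fun_with_small_image_le {ι β : Type*} [Fintype ι] [Nonempty ι] [DecidableEq β]
    (s : Finset β) (k : ℕ) :
    Nat.card {f : ι → β // (∀ i, f i ∈ s) ∧ #(univ.image f) ≤ k} ≤
      k ^ Fintype.card ι * #s ^ k := by
  have hfac : ∀ f : {f : ι → β // (∀ i, f i ∈ s) ∧ #(univ.image f) ≤ k},
      ∃ vc : (Fin k → s) × (ι → Fin k), ∀ i, (vc.1 (vc.2 i) : β) = f.1 i := fun f => by
    obtain ⟨v, c, h⟩ := exists_fin_factorization_of_card_image_le f.2.1 f.2.2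
    exact ⟨(v, c), h⟩
  choose φ hφ using hfac
  have hφinj : Function.Injective φ := fun f g hfg =>
    Subtype.ext <| funext fun i => by rw [← hφ f i, ← hφ g i, hfg]
  calc _ ≤ Nat.card ((Fin k → s) × (ι → Fin k)) := Nat.card_le_card_of_injective φ hφinj
    _ = k ^ Fintype.card ι * #s ^ k := by
      simp [Nat.card_prod, Nat.card_fun, mul_comm]

theorem eq_of_abs_eq_of_pos_iff {α : Type*} [AddCommGroup α] [LinearOrder α]
    [IsOrderedAddMonoid α] {a b : α} (hb : b ≠ 0) (habs : |a| = |b|) (hpos : 0 < a ↔ 0 < b) :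
    a = b := by
  rcases abs_eq_abs.mp habs with h | rfl
  · exact h
  · rw [neg_pos] at hpos
    exact (hb.lt_or_gt.elim (fun h => lt_asymm h (hpos.mp h))
      (fun h => lt_asymm h (hpos.mpr h))).elim

theorem card_le_two_pow_mul_card_abs {ι : Type*} [Fintype ι] (P Q : (ι → ℤ) → Prop)
    [Finite {a // Q a}]
    (hPQ : ∀ J, P J → (∀ i, J i ≠ 0) ∧ Q fun i => |J i|) :
    Nat.card {J // P J} ≤ 2 ^ Fintype.card ι * Nat.card {a // Q a} := by
  let φ : {J // P J} → (ι → Bool) × {a // Q a} :=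
    fun J => (fun i => decide (0 < J.1 i), ⟨fun i => |J.1 i|, (hPQ J.1 J.2).2⟩)
  have hφ : Function.Injective φ := by
    rintro ⟨J, hJ⟩ ⟨J', hJ'⟩ h
    simp only [φ, Prod.mk.injEq, Subtype.mk.injEq, funext_iff, decide_eq_decide] at h
    exact Subtype.ext <| funext fun i =>
      eq_of_abs_eq_of_pos_iff ((hPQ J' hJ').1 i) (h.2 i) (h.1 i)
  calc _ ≤ Nat.card ((ι → Bool) × {a // Q a}) := Nat.card_le_card_of_injective φ hφ
    _ = _ := by simp [Nat.card_prod, Nat.card_fun]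

theorem card_balanced_paired_tuples_le_general (n p : ℕ) (hp : 2 ≤ p) :
    Nat.card {J : Fin p → ℤ //
        (∀ i, J i ≠ 0 ∧ |J i| ≤ (n : ℤ)) ∧ (∑ i, J i = 0) ∧
        (∀ i, ∃ i', i' ≠ i ∧ |J i| = |J i'|)} ≤ 2 ^ p * p ^ p * n ^ (p / 2) := by
  have : Nonempty (Fin p) := ⟨⟨0, by omega⟩⟩
  let Q : (Fin p → ℤ) → Prop := fun a => (∀ i, a i ∈ Icc 1 (n : ℤ)) ∧ #(univ.image a) ≤ p / 2
  have : Finite {a // Q a} :=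
    Finite.of_injective (fun a i => (⟨a.1 i, a.2.1 i⟩ : Icc 1 (n : ℤ))) fun a b h =>
      Subtype.ext <| funext fun i => congrArg Subtype.val (congrFun h i)
  calc _ ≤ 2 ^ p * Nat.card {a // Q a} := by
        simpa using card_le_two_pow_mul_card_abs _ Q fun J ⟨hJ, _, hpair⟩ =>
          ⟨fun i => (hJ i).1, fun i => mem_Icc.mpr ⟨Int.one_le_abs (hJ i).1, (hJ i).2⟩,
            by simpa using card_image_le_half_of_forall_exists_ne_eq _ hpair⟩
    _ ≤ 2 ^ p * ((p / 2) ^ p * n ^ (p / 2)) := by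
        gcongr
        simpa [Q] using card_fun_with_small_image_le (ι := Fin p) (Icc 1 (n : ℤ)) (p / 2)
    _ ≤ 2 ^ p * p ^ p * n ^ (p / 2) := by
        rw [mul_assoc]
        gcongr
        exact Nat.div_le_self p 2

/-- The number of balanced tuples `(j_1,...,j_p)` with entries in `{±1,...,±n}` in which
every absolute value occurs with multiplicity at least two is at most `2^p p^p n^⌊p/2⌋`. -/
theorem card_balanced_paired_tuples_le (n p : ℕ) (hn : 2 ≤ n) (hp : 2 ≤ p) :
    Nat.card {J : Fin p → ℤ //
        (∀ i, J i ≠ 0 ∧ |J i| ≤ (n : ℤ)) ∧ (∑ i, J i = 0) ∧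
        (∀ i, ∃ i', i' ≠ i ∧ |J i| = |J i'|)} ≤ 2 ^ p * p ^ p * n ^ (p / 2) :=
  card_balanced_paired_tuples_le_general n p hp
end
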